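/- arXiv:2511.22881 — 10 statements merged into one kernel-verified Lean document; each statement's English description precedes it below -/
import Mathlib

section
/- Let p be an odd prime and S the set of nonzero squares of F_p. If f ∈ F_p[X] is nonzero and satisfies f(a)^2 = a for all a ∈ S, then (p-1)/4 ≤ deg f. -/
open Polynomial

/-- If a nonzero `f ∈ F_p[X]` satisfies `f(a)^2 = a` for all nonzero squares `a`,
then `(p-1)/4 ≤ deg f`. -/
theorem stmt_1 (p : ℕ) [Fact p.Prime] (hp : p ≠ 2) (f : Polynomial (ZMod p))
    (hf0 : f ≠ 0)
    (hf : ∀ a : ZMod p, a ≠ 0 → IsSquare a → (f.eval a) ^ 2 = a) :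
    (p - 1) / 4 ≤ f.natDegree := by
  set d := f.natDegree with hd
  set g : Polynomial (ZMod p) := f ^ 2 - X with hg
  have hg0 : g ≠ 0 := by
    intro h
    have h2 : f ^ 2 = X := by rwa [sub_eq_zero] at h
    have h3 := congrArg natDegree h2
    rw [natDegree_pow, natDegree_X] at h3
    omega
  set h : Polynomial (ZMod p) := g.comp (X ^ 2) with hh
  have hh0 : h ≠ 0 := by
    rw [hh, Ne, comp_eq_zero_iff]
    push_neg
    refine ⟨hg0, fun _ hcon => ?_⟩
    have := congrArg natDegree hcon
    simp [natDegree_X_pow] at this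
  have hroots : ∀ x : ZMod p, x ≠ 0 → h.eval x = 0 := by
    intro x hx
    have hsq : IsSquare ((x : ZMod p) ^ 2) := ⟨x, sq x⟩
    have hne : (x : ZMod p) ^ 2 ≠ 0 := pow_ne_zero _ hx
    have hv := hf _ hne hsq
    simp only [hh, hg, eval_comp, eval_sub, eval_pow, eval_X]
    rw [hv, sub_self]
  have hcard : p - 1 ≤ h.natDegree := by
    have hsub : (Finset.univ \ {0} : Finset (ZMod p)) ⊆ h.roots.toFinset := by
      intro x hx
      simp only [Finset.mem_sdiff, Finset.mem_singleton] at hx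
      rw [Multiset.mem_toFinset, mem_roots hh0]
      exact hroots x hx.2
    have h1 := Finset.card_le_card hsub
    have h2 := Multiset.toFinset_card_le h.roots
    have h3 := h.card_roots'
    have h4 : (Finset.univ \ {0} : Finset (ZMod p)).card = p - 1 := by
      rw [Finset.card_sdiff_of_subset (by simp), Finset.card_univ, ZMod.card,
        Finset.card_singleton]
    omega
  have hdegh : h.natDegree = g.natDegree * 2 := by
    rw [hh, natDegree_comp, natDegree_X_pow]
  by_cases hd0 : d = 0
  · have hgle : g.natDegree ≤ 1 := by
      refine le_trans (natDegree_sub_le _ _) ?_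
      simp [natDegree_pow, ← hd, hd0]
    omega
  · have hgd : g.natDegree = 2 * d := by
      have hlt : (X : (ZMod p)[X]).natDegree < (f ^ 2).natDegree := by
        rw [natDegree_X, natDegree_pow]; omega
      rw [hg, natDegree_sub_eq_left_of_natDegree_lt hlt, natDegree_pow]
    omega
end

section
/- Let p be a prime and n an integer with 2 < n < p/2. Suppose f ∈ F_p[X] satisfies f(X)^2 = b_0 + b_1 X + b_{2n-1} X^{2n-1} + b_{2n} X^{2n} for some coefficients b_0, b_1, b_{2n-1}, b_{2n} ∈ F_p (i.e., all coefficients of f^2 in degrees other than 0, 1, 2n-1, 2n vanish). Then f is a monomial (f = c·X^m for some c ∈ F_p and m ≥ 0). -/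
open Polynomial Finset

private lemma catalan_range_succ (n : ℕ) :
    catalan (n + 1) = ∑ k ∈ Finset.range (n + 1), catalan k * catalan (n - k) := by
  rw [catalan_succ', Finset.Nat.sum_antidiagonal_eq_sum_range_succ_mk]

private lemma catalan_ne_zero_mod (p n : ℕ) [Fact p.Prime] (hnp : 2 * n < p) :
    (catalan n : ZMod p) ≠ 0 := by
  have hp : p.Prime := Fact.out
  rw [Ne, ZMod.natCast_eq_zero_iff]
  intro hdvd
  have h1 : p ∣ n.centralBinom := hdvd.trans ⟨n + 1, by
    rw [← succ_mul_catalan_eq_centralBinom]; ring⟩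
  have h2 : n.centralBinom ∣ (2 * n).factorial := by
    rw [Nat.centralBinom]
    exact ⟨n.factorial * n.factorial, (Nat.choose_mul_factorial_mul_factorial
      (by omega : n ≤ 2 * n)).symm.trans (by rw [show 2 * n - n = n by omega]; ring)⟩
  have := (Nat.Prime.dvd_factorial hp).mp (h1.trans h2)
  omega

/-- If `f^2` has nonzero coefficients only in degrees `0, 1, 2n-1, 2n`,
with `2 < n < p/2`, then `f` is a monomial. -/
theorem stmt_3 (p : ℕ) [Fact p.Prime] (n : ℕ) (hn : 2 < n) (hnp : 2 * n < p)
    (f : Polynomial (ZMod p))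
    (hcoeff : ∀ i : ℕ, i ≠ 0 → i ≠ 1 → i ≠ 2 * n - 1 → i ≠ 2 * n →
      (f ^ 2).coeff i = 0) :
    ∃ (c : ZMod p) (m : ℕ), f = C c * X ^ m := by
  by_cases hf0 : f = 0
  · exact ⟨0, 0, by simp [hf0]⟩
  set m := f.natTrailingDegree with hm
  set d := f.natDegree with hd
  by_cases hmd : d ≤ m
  · -- f is a monomial
    refine ⟨f.coeff d, d, ?_⟩
    ext i
    rw [coeff_C_mul, coeff_X_pow]
    rcases lt_trichotomy i d with h | h | h
    · rw [if_neg h.ne, mul_zero,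
        coeff_eq_zero_of_lt_natTrailingDegree (lt_of_lt_of_le h hmd)]
    · simp [h]
    · rw [if_neg h.ne', mul_zero, coeff_eq_zero_of_natDegree_lt h]
  push_neg at hmd
  exfalso
  -- lowest and highest coefficients of f^2 are nonzero
  have hlow : (f ^ 2).coeff (2 * m) ≠ 0 := by
    rw [sq, two_mul, hm, ← natTrailingDegree_mul hf0 hf0]
    have : (f * f).coeff (f * f).natTrailingDegree = (f * f).trailingCoeff := rfl
    rw [this, trailingCoeff_mul]
    exact mul_ne_zero (trailingCoeff_nonzero_iff_nonzero.mpr hf0)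
      (trailingCoeff_nonzero_iff_nonzero.mpr hf0)
  have hhigh : (f ^ 2).coeff (2 * d) ≠ 0 := by
    have hnd : (f ^ 2).natDegree = 2 * d := by rw [natDegree_pow]
    rw [← hnd, coeff_natDegree, leadingCoeff_pow]
    exact pow_ne_zero _ (leadingCoeff_ne_zero.mpr hf0)
  have h2m : 2 * m = 0 ∨ 2 * m = 1 ∨ 2 * m = 2 * n - 1 ∨ 2 * m = 2 * n := by
    by_contra h; push_neg at h
    exact hlow (hcoeff _ h.1 h.2.1 h.2.2.1 h.2.2.2)
  have h2d : 2 * d = 0 ∨ 2 * d = 1 ∨ 2 * d = 2 * n - 1 ∨ 2 * d = 2 * n := by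
    by_contra h; push_neg at h
    exact hhigh (hcoeff _ h.1 h.2.1 h.2.2.1 h.2.2.2)
  have hm0 : m = 0 := by omega
  have hdn : d = n := by omega
  -- nonzero constant and leading coefficients
  have ha0 : f.coeff 0 ≠ 0 := by
    have : f.coeff m ≠ 0 := trailingCoeff_nonzero_iff_nonzero.mpr hf0
    rwa [hm0] at this
  have han : f.coeff n ≠ 0 := by
    have : f.coeff d ≠ 0 := by rw [coeff_natDegree]; exact leadingCoeff_ne_zero.mpr hf0
    rwa [hdn] at this
  have hp2 : (2 : ZMod p) ≠ 0 := by
    have hp : p.Prime := Fact.out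
    intro h
    have : ((2 : ℕ) : ZMod p) = 0 := by exact_mod_cast h
    rw [ZMod.natCast_eq_zero_iff] at this
    have := Nat.le_of_dvd (by norm_num) this
    omega
  -- normalize
  set c : ZMod p := -(2 * f.coeff 0)⁻¹ with hc
  have hcne : c ≠ 0 := by
    rw [hc, neg_ne_zero]
    exact inv_ne_zero (mul_ne_zero hp2 ha0)
  set b : ℕ → ZMod p := fun k => c * f.coeff k with hb
  have hb0 : 2 * b 0 = -1 := by
    show 2 * (c * f.coeff 0) = -1
    rw [hc]
    field_simp
  -- vanishing convolutions
  have hconv : ∀ k, 2 ≤ k → k ≤ 2 * n - 2 →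
      ∑ i ∈ Finset.range (k + 1), b i * b (k - i) = 0 := by
    intro k hk1 hk2
    have h0 : (f ^ 2).coeff k = 0 := hcoeff k (by omega) (by omega) (by omega) (by omega)
    have : ∑ i ∈ Finset.range (k + 1), b i * b (k - i)
        = c ^ 2 * ∑ i ∈ Finset.range (k + 1), f.coeff i * f.coeff (k - i) := by
      rw [Finset.mul_sum]
      refine Finset.sum_congr rfl fun i _ => ?_
      show c * f.coeff i * (c * f.coeff (k - i)) = _
      ring
    rw [this, ← Finset.Nat.sum_antidiagonal_eq_sum_range_succ_mk
      (fun ij => f.coeff ij.1 * f.coeff ij.2), ← coeff_mul, ← sq, h0, mul_zero]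
  have hbn1 : b (n + 1) = 0 := by
    show c * f.coeff (n + 1) = 0
    rw [coeff_eq_zero_of_natDegree_lt (by omega), mul_zero]
  have hbnne : b n ≠ 0 := by
    show c * f.coeff n ≠ 0
    exact mul_ne_zero hcne han
  clear_value b
  clear_value c
  -- the Catalan recurrence
  have hrec : ∀ k, 2 ≤ k → k ≤ 2 * n - 2 →
      b k = ∑ i ∈ Finset.range (k - 1), b (i + 1) * b (k - 1 - i) := by
    intro k hk1 hk2
    obtain ⟨j, rfl⟩ : ∃ j, k = j + 2 := ⟨k - 2, by omega⟩
    have h := hconv (j + 2) hk1 hk2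
    rw [Finset.sum_range_succ', Finset.sum_range_succ] at h
    simp only [Nat.sub_zero, Nat.sub_self, Nat.add_sub_cancel, show j + 1 + 1 = j + 2 from rfl] at h
    have hsum : ∑ i ∈ Finset.range (j + 2 - 1), b (i + 1) * b (j + 2 - 1 - i)
        = ∑ i ∈ Finset.range (j + 1), b (i + 1) * b (j + 2 - (i + 1)) := by
      apply Finset.sum_congr (by norm_num)
      intro i hi
      rw [Finset.mem_range] at hi
      congr 2
      omega
    rw [hsum]
    linear_combination -h + b (j + 2) * hb0
  -- coefficients are Catalan numbers
  have hcat : ∀ k, k ≤ n → b (k + 1) = (catalan k : ZMod p) * b 1 ^ (k + 1) := by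
    intro k
    induction k using Nat.strong_induction_on with
    | _ k ih =>
      intro hk
      match k with
      | 0 => simp
      | (j + 1) =>
        have h := hrec (j + 2) (by omega) (by omega)
        simp only [show j + 2 - 1 = j + 1 from rfl] at h
        rw [h]
        have : ∑ i ∈ Finset.range (j + 1), b (i + 1) * b (j + 1 - i)
            = ∑ i ∈ Finset.range (j + 1),
              ((catalan i * catalan (j - i) : ℕ) : ZMod p) * b 1 ^ (j + 2) := by
          apply Finset.sum_congr rfl
          intro i hi
          rw [Finset.mem_range] at hi
          rw [ih i (by omega) (by omega), show j + 1 - i = (j - i) + 1 by omega,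
            ih (j - i) (by omega) (by omega)]
          push_cast
          rw [mul_mul_mul_comm, ← pow_add, show i + 1 + (j - i + 1) = j + 2 by omega]
        rw [this, ← Finset.sum_mul, ← Nat.cast_sum, ← catalan_range_succ]
  -- conclude
  have hb1 : b 1 = 0 := by
    have h := hcat n le_rfl
    rw [hbn1] at h
    have := (mul_eq_zero.mp h.symm).resolve_left (catalan_ne_zero_mod p n hnp)
    exact pow_eq_zero_iff (by omega) |>.mp this
  have hbn : b n = 0 := by
    have h := hcat (n - 1) (by omega)
    rw [show n - 1 + 1 = n by omega] at h
    rw [h, hb1, zero_pow (by omega), mul_zero]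
  exact hbnne hbn
end

section
/- Let p be a prime with 2n < p. If a sequence a_0 = -1/2, a_1, ..., a_n in F_p satisfies a_{k+1} = Σ_{i=1}^{k} a_i a_{k+1-i} for all 1 ≤ k ≤ n-1, then a_k = C_{k-1}·a_1^k for all 1 ≤ k ≤ n, where C_j denotes the j-th Catalan number (reduced mod p). -/
/-!
Strong induction on `k`: substituting the induction hypothesis into the convolution turns
the summand `a i * a (k + 1 - i)` into `C (i - 1) * C (k - i) * a 1 ^ (k + 1)`, and Segner's
recurrence `C k = ∑_{i=1}^{k} C (i - 1) * C (k - i)` sums these to `C k * a 1 ^ (k + 1)`.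
-/

open Finset

lemma catalan_succ_eq_sum_Icc (m : ℕ) :
    catalan (m + 1) = ∑ i ∈ Icc 1 (m + 1), catalan (i - 1) * catalan (m + 1 - i) := by
  rw [catalan_succ, Fin.sum_univ_eq_sum_range (fun i => catalan i * catalan (m - i)),
    ← Ico_add_one_right_eq_Icc, sum_Ico_eq_sum_range]
  refine sum_congr (by simp) fun i _ => ?_
  rw [add_tsub_cancel_left, add_comm m, Nat.add_sub_add_left]

theorem eq_catalan_mul_pow_of_convolution {R : Type*} [CommSemiring R] (n : ℕ) (a : ℕ → R)
    (hrec : ∀ k : ℕ, 1 ≤ k → k ≤ n - 1 →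
      a (k + 1) = ∑ i ∈ Icc 1 k, a i * a (k + 1 - i)) :
    ∀ k : ℕ, 1 ≤ k → k ≤ n → a k = (catalan (k - 1) : R) * a 1 ^ k := by
  intro k
  induction k using Nat.strong_induction_on with
  | _ k ih =>
  intro hk hkn
  obtain rfl | ⟨m, rfl⟩ : k = 1 ∨ ∃ m, k = m + 2 := by
    rcases Nat.lt_or_ge k 2 with hk2 | hk2
    · exact .inl (by omega)
    · exact .inr ⟨k - 2, by omega⟩
  · simp
  have hterm : ∀ i ∈ Icc 1 (m + 1), a i * a (m + 2 - i) =
      ((catalan (i - 1) * catalan (m + 1 - i) : ℕ) : R) * a 1 ^ (m + 2) := by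
    intro i hi
    rw [mem_Icc] at hi
    rw [ih i (by omega) (by omega) (by omega), ih (m + 2 - i) (by omega) (by omega) (by omega),
      show m + 2 - i - 1 = m + 1 - i by omega, Nat.cast_mul, mul_mul_mul_comm, ← pow_add,
      show i + (m + 2 - i) = m + 2 by omega]
  calc a (m + 2) = ∑ i ∈ Icc 1 (m + 1), a i * a (m + 2 - i) := hrec (m + 1) (by omega) (by omega)
    _ = ∑ i ∈ Icc 1 (m + 1), ((catalan (i - 1) * catalan (m + 1 - i) : ℕ) : R) * a 1 ^ (m + 2) :=
      sum_congr rfl hterm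
    _ = catalan (m + 1) * a 1 ^ (m + 2) := by
      rw [← sum_mul, ← Nat.cast_sum, ← catalan_succ_eq_sum_Icc]

theorem stmt_4_general (p : ℕ) (n : ℕ)
    (a : ℕ → ZMod p)
    (hrec : ∀ k : ℕ, 1 ≤ k → k ≤ n - 1 →
      a (k + 1) = ∑ i ∈ Finset.Icc 1 k, a i * a (k + 1 - i)) :
    ∀ k : ℕ, 1 ≤ k → k ≤ n → a k = (catalan (k - 1) : ZMod p) * (a 1) ^ k :=
  eq_catalan_mul_pow_of_convolution n a hrec

/-- If `a 0 = -1/2` and `a (k+1) = ∑_{i=1}^k a i * a (k+1-i)` for `1 ≤ k ≤ n-1`,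
then `a k = C_{k-1} * (a 1)^k` for `1 ≤ k ≤ n`, where `C_j` is the `j`-th Catalan
number. -/
theorem stmt_4 (p : ℕ) [Fact p.Prime] (n : ℕ) (hnp : 2 * n < p)
    (a : ℕ → ZMod p) (h0 : a 0 = -(2 : ZMod p)⁻¹)
    (hrec : ∀ k : ℕ, 1 ≤ k → k ≤ n - 1 →
      a (k + 1) = ∑ i ∈ Finset.Icc 1 k, a i * a (k + 1 - i)) :
    ∀ k : ℕ, 1 ≤ k → k ≤ n → a k = (catalan (k - 1) : ZMod p) * (a 1) ^ k :=
  stmt_4_general p n a hrec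
end

section
/- Let p be an odd prime with p-1 = 2^s·q, q odd, and ζ a primitive 2^{s-1}-th root of unity in F_p. Let S_k = {a ∈ squares of F_p^× : a^q = ζ^k}. If f ∈ F_p[X] is nonconstant and satisfies f(a)^2 = a for all a ∈ S_k, then deg f ≥ (q+1)/2. -/
/-!
The elements `a` with `a ^ q = ζ ^ k` are the `q` distinct `q`-th roots of `ζ ^ k`: it has a `q`-th
root since its order is a power of two, and `ZMod p` contains a primitive `q`-th root of unity
because `q ∣ p - 1`. Each such `a` satisfies `a ^ (p / 2) = (ζ ^ k) ^ 2 ^ (s - 1) = 1`, so it is a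
nonzero square by Euler's criterion. Hence `f ^ 2` and `X` agree at `q` points; as `f ^ 2 ≠ X`
(parity of degrees), `q ≤ 2 deg f`, and `q` odd gives `(q + 1) / 2 ≤ deg f`.
-/

open Polynomial Finset

theorem exists_pow_eq_of_pow_eq_one_of_coprime {M : Type*} [Monoid M] {c : M} {n q : ℕ}
    (hc : c ^ n = 1) (hq : q.Coprime n) : ∃ b : M, b ^ q = c := by
  obtain ⟨m, hm⟩ :=
    exists_pow_eq_self_of_coprime (hq.coprime_dvd_right (orderOf_dvd_of_pow_eq_one hc))
  exact ⟨c ^ m, by rw [← pow_mul, mul_comm, pow_mul, hm]⟩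

theorem FiniteField.exists_isPrimitiveRoot_of_dvd {K : Type*} [Field K] [Fintype K] {n : ℕ}
    (hn : n ∣ Fintype.card K - 1) : ∃ η : K, IsPrimitiveRoot η n := by
  classical
  obtain ⟨g, hg_ord⟩ := IsCyclic.exists_ofOrder_eq_natCard (α := Kˣ)
  have hcard : Nat.card Kˣ = Fintype.card K - 1 := by
    rw [Nat.card_eq_fintype_card, Fintype.card_units]
  have hg : IsPrimitiveRoot (g : K) (Fintype.card K - 1) := by
    rw [IsPrimitiveRoot.coe_units_iff, ← hcard, ← hg_ord]
    exact IsPrimitiveRoot.orderOf g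
  have hpos : 0 < Fintype.card K - 1 := Nat.sub_pos_of_lt Fintype.one_lt_card
  refine ⟨(g : K) ^ ((Fintype.card K - 1) / n), ?_⟩
  convert hg.pow_of_dvd (Nat.div_pos (Nat.le_of_dvd hpos hn) (Nat.pos_of_dvd_of_pos hn hpos)).ne'
    (Nat.div_dvd_of_dvd hn)
  exact (Nat.div_div_self hn hpos.ne').symm

theorem IsPrimitiveRoot.card_nthRootsFinset_of_pow_eq {R : Type*} [CommRing R] [IsDomain R]
    {η : R} {n : ℕ} (hη : IsPrimitiveRoot η n) {b c : R} (hb : b ^ n = c) (hc : c ≠ 0) :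
    #(nthRootsFinset n c) = n := by
  classical
  rw [nthRootsFinset_def, Multiset.toFinset_card_of_nodup (hη.nthRoots_nodup hc),
    hη.card_nthRoots, if_pos ⟨b, hb⟩]

theorem Nat.Prime.div_two_eq_of_sub_one_eq {p s q : ℕ} (hp : p.Prime) (hpq : p - 1 = 2 ^ s * q)
    (hq : Odd q) : p / 2 = 2 ^ (s - 1) * q := by
  rcases hp.eq_two_or_odd' with rfl | hodd
  · obtain ⟨hs, rfl⟩ := mul_eq_one.mp hpq.symm
    obtain rfl : s = 0 := (Nat.pow_eq_one.mp hs).resolve_left (by norm_num)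
    rfl
  · obtain ⟨t, rfl⟩ := hodd
    cases s with
    | zero => obtain ⟨r, rfl⟩ := hq; omega
    | succ s =>
      rw [pow_succ, mul_comm _ 2, mul_assoc] at hpq
      simp only [add_tsub_cancel_right]
      omega

theorem ZMod.isSquare_of_pow_div_two_eq_one {p : ℕ} [Fact p.Prime] {a : ZMod p}
    (h : a ^ (p / 2) = 1) : IsSquare a :=
  (ZMod.euler_criterion p ((IsUnit.of_pow_eq_one h
    (Nat.div_pos (Fact.out : p.Prime).two_le two_pos).ne').ne_zero)).mpr h

theorem Polynomial.card_le_two_mul_natDegree_of_eval_sq_eq {R : Type*} [CommRing R] [IsDomain R]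
    {f : R[X]} (hf : 0 < f.natDegree) {S : Finset R} (h : ∀ a ∈ S, f.eval a ^ 2 = a) :
    #S ≤ 2 * f.natDegree := by
  by_contra! hlt
  have hsq : f ^ 2 = X := by
    refine eq_of_natDegree_lt_card_of_eval_eq' _ _ S (by simpa using h) ?_
    rw [natDegree_pow, natDegree_X]
    omega
  have := congrArg natDegree hsq
  rw [natDegree_pow, natDegree_X] at this
  omega

theorem stmt_6_general (p s q : ℕ) [Fact p.Prime]
    (hpq : p - 1 = 2 ^ s * q) (hq : Odd q)
    (ζ : ZMod p) (hζ : IsPrimitiveRoot ζ (2 ^ (s - 1))) (k : ℕ)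
    (f : Polynomial (ZMod p)) (hnc : 0 < f.natDegree)
    (hf : ∀ a : ZMod p, a ≠ 0 → IsSquare a → a ^ q = ζ ^ k →
      (f.eval a) ^ 2 = a) :
    (q + 1) / 2 ≤ f.natDegree := by
  have hc : (ζ ^ k) ^ 2 ^ (s - 1) = 1 := by
    rw [← pow_mul, mul_comm, pow_mul, hζ.pow_eq_one, one_pow]
  have hc0 : ζ ^ k ≠ 0 := (IsUnit.of_pow_eq_one hc (by positivity)).ne_zero
  obtain ⟨b, hb⟩ := exists_pow_eq_of_pow_eq_one_of_coprime hc
    (Nat.Coprime.pow_right _ (Nat.coprime_two_right.mpr hq))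
  obtain ⟨η, hη⟩ := FiniteField.exists_isPrimitiveRoot_of_dvd (K := ZMod p) (n := q)
    ⟨2 ^ s, by rw [ZMod.card, hpq, mul_comm]⟩
  have hS := card_le_two_mul_natDegree_of_eval_sq_eq hnc (S := nthRootsFinset q (ζ ^ k))
    fun a ha ↦ by
      rw [mem_nthRootsFinset hq.pos] at ha
      have ha' : a ^ (p / 2) = 1 := by
        rw [(Fact.out : p.Prime).div_two_eq_of_sub_one_eq hpq hq, mul_comm, pow_mul, ha, hc]
      exact hf a (ne_zero_pow hq.pos.ne' (ha ▸ hc0)) (ZMod.isSquare_of_pow_div_two_eq_one ha') ha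
  rw [hη.card_nthRootsFinset_of_pow_eq hb hc0] at hS
  obtain ⟨r, rfl⟩ := hq
  omega

/-- With `p - 1 = 2^s q` (`q` odd), `ζ` a primitive `2^(s-1)`-th root of unity,
any nonconstant `f` computing square roots on `S_k = {a square : a^q = ζ^k}`
has degree at least `(q+1)/2`. -/
theorem stmt_6 (p s q : ℕ) [Fact p.Prime] (hp : p ≠ 2)
    (hpq : p - 1 = 2 ^ s * q) (hq : Odd q)
    (ζ : ZMod p) (hζ : IsPrimitiveRoot ζ (2 ^ (s - 1))) (k : ℕ)
    (f : Polynomial (ZMod p)) (hnc : 0 < f.natDegree)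
    (hf : ∀ a : ZMod p, a ≠ 0 → IsSquare a → a ^ q = ζ ^ k →
      (f.eval a) ^ 2 = a) :
    (q + 1) / 2 ≤ f.natDegree :=
  stmt_6_general p s q hpq hq ζ hζ k f hnc hf
end

section
/- Let p be an odd prime, p ≡ 3 (mod 4), p ≥ 11, and S the set of nonzero squares in F_p. If f ∈ F_p[X] has degree (p+1)/4 and satisfies f(a)^2 = a for all a ∈ S, then f(X) = ±X^((p+1)/4). -/
open Polynomial

/-! Write `q = (p - 1) / 2`. The nonzero squares are exactly the roots of `X ^ q - 1`, which
splits with distinct roots over `𝔽_p`, so `X ^ q - 1 ∣ f ^ 2 - X`; comparing degrees, the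
quotient is linear: `f ^ 2 = (X ^ q - 1) (c X + d) + X`. Differentiating and using `2 q + 1 = p = 0`
eliminates `X ^ q` and shows that `f` divides an explicit polynomial of degree at most `2`.
Since `deg f ≥ 3`, that polynomial vanishes, which forces `d = 0`, `c = 1`, i.e.
`f ^ 2 = X ^ (q + 1) = (X ^ ((p + 1) / 4)) ^ 2`. -/

section Field

variable {K : Type*} [Field K]

theorem Polynomial.Splits.dvd_of_forall_isRoot {P g : K[X]} (hP : P.Splits) (hsep : P.Separable)
    (h : ∀ a, P.IsRoot a → g.IsRoot a) : P ∣ g := by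
  rcases eq_or_ne g 0 with rfl | hg
  · exact dvd_zero P
  refine hP.dvd_of_roots_le_roots hsep.ne_zero ((Multiset.le_iff_subset (nodup_roots hsep)).2 ?_)
  intro a ha
  exact (mem_roots hg).2 (h a ((mem_roots hsep.ne_zero).1 ha))

theorem FiniteField.splits_X_pow_sub_one_of_dvd [Finite K] {m : ℕ} (hm : m ∣ Nat.card K - 1) :
    (X ^ m - 1 : K[X]).Splits := by
  obtain ⟨k, hk⟩ := hm
  have hcard : 1 ≤ Nat.card K := Nat.card_pos
  have hdvd : (X ^ m - 1 : K[X]) ∣ X ^ Nat.card K - X :=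
    calc (X ^ m - 1 : K[X]) ∣ X ^ (m * k) - 1 := pow_one_sub_dvd_pow_mul_sub_one X m k
      _ ∣ X * (X ^ (m * k) - 1) := dvd_mul_left _ _
      _ = X ^ Nat.card K - X := by
        rw [mul_sub, ← pow_succ', ← hk, Nat.sub_add_cancel hcard, mul_one]
  have : Fintype K := Fintype.ofFinite K
  have hne : (X ^ Nat.card K - X : K[X]) ≠ 0 := by
    rw [Nat.card_eq_fintype_card]
    exact FiniteField.X_pow_card_sub_X_ne_zero K Fintype.one_lt_card
  exact Polynomial.splits_X_pow_nat_card_sub_X.of_dvd hne hdvd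

end Field

theorem ZMod.X_pow_half_sub_one_dvd {p : ℕ} [Fact p.Prime] (hp : p ≠ 2) {g : (ZMod p)[X]}
    (h : ∀ a : ZMod p, a ≠ 0 → IsSquare a → g.IsRoot a) : X ^ (p / 2) - 1 ∣ g := by
  have hp3 : 3 ≤ p := by
    have := (Fact.out : p.Prime).two_le; omega
  have hodd : p = 2 * (p / 2) + 1 := by
    have := (Fact.out : p.Prime).eq_two_or_odd; omega
  have hsep : (X ^ (p / 2) - 1 : (ZMod p)[X]).Separable := by
    rw [X_pow_sub_one_separable_iff]
    intro h0
    have : ((2 * (p / 2) + 1 : ℕ) : ZMod p) = 0 := by rw [← hodd, ZMod.natCast_self]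
    simp [h0] at this
  have hsplits : (X ^ (p / 2) - 1 : (ZMod p)[X]).Splits :=
    FiniteField.splits_X_pow_sub_one_of_dvd ⟨2, by rw [Nat.card_zmod]; omega⟩
  refine hsplits.dvd_of_forall_isRoot hsep fun a ha => ?_
  have ha1 : a ^ (p / 2) = 1 := by simpa [sub_eq_zero] using ha
  have ha0 : a ≠ 0 := by
    rintro rfl
    rw [zero_pow (by omega)] at ha1
    exact zero_ne_one ha1
  exact h a ha0 ((ZMod.euler_criterion p ha0).2 ha1)

section CommRing

variable {R : Type*} [CommRing R]

theorem mul_eq_quadratic_of_sq_eq_X_pow_sub_one_mul_add_X {f : R[X]} {q : ℕ} {c d : R}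
    (hq : ((2 * q + 1 : ℕ) : R) = 0) (h : f ^ 2 = (X ^ q - 1) * (C c * X + C d) + X) :
    f * (C (2 * d) * f + (C c * X + C d) * (4 * X * derivative f - f)) =
      C (c * (1 - c)) * X ^ 2 + C (3 * d - 2 * c * d) * X - C (d ^ 2) := by
  obtain _ | q := q
  · have : Subsingleton R := subsingleton_of_zero_eq_one (by simpa using hq.symm)
    exact Subsingleton.elim _ _
  have hqX : ((2 * (q + 1) + 1 : ℕ) : R[X]) = 0 := by rw [← C_eq_natCast, hq, C_0]
  have hderiv : 2 * f * derivative f =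
      ((q : R[X]) + 1) * X ^ q * (C c * X + C d) + (X ^ (q + 1) - 1) * C c + 1 := by
    simpa [derivative_sq, derivative_mul, derivative_X_pow, C_ofNat] using congrArg derivative h
  push_cast at hqX
  simp only [map_mul, map_sub, map_pow, map_ofNat, map_one]
  linear_combination (2 * C d - (C c * X + C d)) * h + 2 * X * (C c * X + C d) * hderiv
    + X ^ (q + 1) * (C c * X + C d) ^ 2 * hqX

end CommRing

section Domain

variable {R : Type*} [CommRing R] [IsDomain R]

theorem exists_sq_eq_X_pow_sub_one_mul_add_X {f : R[X]} {q : ℕ} (hdeg : 2 * f.natDegree = q + 1)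
    (h : X ^ q - 1 ∣ f ^ 2 - X) : ∃ c d : R, f ^ 2 = (X ^ q - 1) * (C c * X + C d) + X := by
  obtain ⟨A, hA⟩ := h
  have hmonic : (X ^ q - 1 : R[X]).Monic := by
    simpa using monic_X_pow_sub_C (1 : R) (n := q) (by omega)
  have hfX : (f ^ 2 - X).natDegree = q + 1 := by
    rw [natDegree_sub_eq_left_of_natDegree_lt] <;> simp [natDegree_pow] <;> omega
  have hA0 : A ≠ 0 := by
    rintro rfl
    rw [mul_zero] at hA
    simp [hA] at hfX
  have hA1 : A.natDegree = 1 := by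
    have := hmonic.natDegree_mul' hA0
    rw [← hA, hfX, ← C_1, natDegree_X_pow_sub_C] at this
    omega
  refine ⟨A.coeff 1, A.coeff 0, ?_⟩
  rw [← eq_X_add_C_of_natDegree_le_one hA1.le, ← hA, sub_add_cancel]

theorem sq_eq_X_pow_succ_of_sq_eq {f : R[X]} {q : ℕ} {c d : R} (hq : ((2 * q + 1 : ℕ) : R) = 0)
    (hf : 3 ≤ f.natDegree) (h : f ^ 2 = (X ^ q - 1) * (C c * X + C d) + X) :
    f ^ 2 = X ^ (q + 1) := by
  have hquad : C (c * (1 - c)) * X ^ 2 + C (3 * d - 2 * c * d) * X - C (d ^ 2) = 0 := by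
    refine eq_zero_of_dvd_of_natDegree_lt
      (Dvd.intro _ (mul_eq_quadratic_of_sq_eq_X_pow_sub_one_mul_add_X hq h)) ?_
    have : (C (c * (1 - c)) * X ^ 2 + C (3 * d - 2 * c * d) * X - C (d ^ 2)).natDegree ≤ 2 := by
      compute_degree
    omega
  have hd : d = 0 := by
    have := congrArg (coeff · 0) hquad
    simp only [coeff_add, coeff_sub, coeff_C_mul_X_pow, coeff_C_mul_X, coeff_C, coeff_zero] at this
    simpa using this
  have hc : c * (1 - c) = 0 := by
    have := congrArg (coeff · 2) hquad
    simp only [coeff_add, coeff_sub, coeff_C_mul_X_pow, coeff_C_mul_X, coeff_C, coeff_zero] at this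
    simpa using this
  rcases mul_eq_zero.1 hc with rfl | hc1
  · have : 2 * f.natDegree = 1 := by simpa [hd, natDegree_pow] using congrArg natDegree h
    omega
  · rw [hd, ← sub_eq_zero.1 hc1] at h
    rw [h, C_1, C_0]
    ring

end Domain

/-- For `p ≡ 3 (mod 4)`, `p ≥ 11`, the only degree-`(p+1)/4` polynomials
computing square roots on the nonzero squares are `± X^((p+1)/4)`. -/
theorem stmt_7 (p : ℕ) [Fact p.Prime] (hp : p % 4 = 3) (hp11 : 11 ≤ p)
    (f : Polynomial (ZMod p)) (hdeg : f.natDegree = (p + 1) / 4)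
    (hf : ∀ a : ZMod p, a ≠ 0 → IsSquare a → (f.eval a) ^ 2 = a) :
    f = X ^ ((p + 1) / 4) ∨ f = -(X ^ ((p + 1) / 4)) := by
  have hq : ((2 * (p / 2) + 1 : ℕ) : ZMod p) = 0 := by
    rw [show 2 * (p / 2) + 1 = p by omega, ZMod.natCast_self]
  have hdvd : X ^ (p / 2) - 1 ∣ f ^ 2 - X :=
    ZMod.X_pow_half_sub_one_dvd (by omega) fun a ha0 hsq => by simp [hf a ha0 hsq]
  obtain ⟨c, d, hcd⟩ := exists_sq_eq_X_pow_sub_one_mul_add_X (by omega) hdvd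
  have hsq : f ^ 2 = (X ^ ((p + 1) / 4)) ^ 2 := by
    rw [sq_eq_X_pow_succ_of_sq_eq hq (by omega) hcd, ← pow_mul]
    congr 1
    omega
  exact sq_eq_sq_iff_eq_or_eq_neg.1 hsq
end

section
/- Let r be a positive integer and ε ∈ {±1}^r. Let a(ε) denote the least positive integer m with σ^m(ε) = -ε (σ the flip-shift). Then d := a(ε) divides r, the quotient D = r/d is odd, and ε_{dx+y} = (-1)^x ε_y for all 0 ≤ x < D, 0 ≤ y < d. -/
/-- The flip-shift map on sign vectors: `σ(ε) = (ε_1, ..., ε_{r-1}, -ε_0)`. -/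
def flipShift {r : ℕ} (ε : Fin r → ℤ) : Fin r → ℤ :=
  fun i => if h : (i : ℕ) + 1 < r then ε ⟨(i : ℕ) + 1, h⟩ else -ε ⟨0, i.pos⟩

lemma idx_lt {d r x y : ℕ} (hx : x < r / d) (hy : y < d) : d * x + y < r := by
  have h1 : d * x.succ ≤ d * (r / d) := Nat.mul_le_mul le_rfl (Nat.succ_le_of_lt hx)
  have h2 : d * (r / d) ≤ r := by
    calc d * (r / d) = r / d * d := Nat.mul_comm d (r / d)
    _ ≤ r := Nat.div_mul_le_self r d
  have h3 : d * x.succ = d * x + d := Nat.mul_succ d x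
  omega

lemma flipShift_neg {r : ℕ} (ε : Fin r → ℤ) : flipShift (-ε) = -flipShift ε := by
  funext i
  simp only [flipShift, Pi.neg_apply]
  split <;> ring

lemma flipShift_iter_neg {r : ℕ} (m : ℕ) (ε : Fin r → ℤ) :
    flipShift^[m] (-ε) = -flipShift^[m] ε := by
  induction m generalizing ε with
  | zero => rfl
  | succ n ih =>
      rw [Function.iterate_succ_apply, Function.iterate_succ_apply, flipShift_neg, ih]

lemma flipShift_no_wrap {r : ℕ} (m : ℕ) : ∀ (ε : Fin r → ℤ) (j : ℕ) (hj : j + m < r),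
    flipShift^[m] ε ⟨j, by omega⟩ = ε ⟨j + m, hj⟩ := by
  induction m with
  | zero => intro ε j hj; rfl
  | succ n ih =>
      intro ε j hj
      rw [Function.iterate_succ_apply]
      have hjn : j + n < r := by omega
      rw [ih (flipShift ε) j hjn]
      simp only [flipShift]
      rw [dif_pos (show (j + n) + 1 < r by omega)]
      exact congrArg ε (Fin.mk_eq_mk.mpr (by omega))

lemma flipShift_iter_r {r : ℕ} (ε : Fin r → ℤ) : flipShift^[r] ε = -ε := by
  funext i
  have hi : (i : ℕ) < r := i.isLt
  rw [show flipShift^[r] ε = flipShift^[r - 1 - (i : ℕ)] (flipShift^[(i : ℕ) + 1] ε) from by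
    rw [← Function.iterate_add_apply]; congr 1; omega]
  have h1 : (i : ℕ) + (r - 1 - (i : ℕ)) < r := by omega
  have key := flipShift_no_wrap (r - 1 - (i : ℕ)) (flipShift^[(i : ℕ) + 1] ε) (i : ℕ) h1
  rw [show (⟨(i : ℕ), by omega⟩ : Fin r) = i from Fin.ext rfl] at key
  rw [key, Function.iterate_succ_apply']
  simp only [flipShift]
  rw [dif_neg (by simp only []; omega :
    ¬ ((⟨(i : ℕ) + (r - 1 - (i : ℕ)), h1⟩ : Fin r) : ℕ) + 1 < r)]
  have h0 : (0 : ℕ) + (i : ℕ) < r := by omega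
  have key2 := flipShift_no_wrap (i : ℕ) ε 0 h0
  rw [Pi.neg_apply]
  congr 1
  rw [key2]
  congr 1
  exact Fin.ext (by simp)

lemma flipShift_iter_mul {r : ℕ} (ε : Fin r → ℤ) (d : ℕ)
    (hflip : flipShift^[d] ε = -ε) (x : ℕ) :
    flipShift^[d * x] ε = ((-1 : ℤ) ^ x) • ε := by
  induction x with
  | zero => simp
  | succ n ih =>
      rw [show d * (n + 1) = d * n + d by ring, Function.iterate_add_apply, hflip,
        flipShift_iter_neg, ih]
      funext i
      simp only [Pi.neg_apply, Pi.smul_apply, smul_eq_mul, pow_succ]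
      ring

/-- If `d = a(ε)` is the least positive integer with `σ^d(ε) = -ε`, then
`d ∣ r`, the quotient `D = r/d` is odd, and `ε` is alternating periodic:
`ε_{dx+y} = (-1)^x ε_y`. -/
theorem stmt_13 (r : ℕ) (hr : 0 < r) (ε : Fin r → ℤ)
    (hε : ∀ i, ε i = 1 ∨ ε i = -1)
    (d : ℕ) (hd : 0 < d) (hflip : flipShift^[d] ε = -ε)
    (hmin : ∀ m : ℕ, 0 < m → flipShift^[m] ε = -ε → d ≤ m) :
    d ∣ r ∧ Odd (r / d) ∧
      ∀ (x y : ℕ) (hx : x < r / d) (hy : y < d),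
        ε ⟨d * x + y, idx_lt hx hy⟩ =
          (-1 : ℤ) ^ x *
            ε ⟨y, lt_of_le_of_lt (Nat.le_add_left y (d * x)) (idx_lt hx hy)⟩ := by
  have hne0 : ε ≠ -ε := by
    intro h
    have h2 := congrFun h ⟨0, hr⟩
    rw [Pi.neg_apply] at h2
    rcases hε ⟨0, hr⟩ with h1 | h1 <;> rw [h1] at h2 <;> omega
  set q := r / d with hq
  set s := r % d with hs
  have hrqs : r = d * q + s := (Nat.div_add_mod r d).symm
  have hslt : s < d := Nat.mod_lt r hd
  have hiter : flipShift^[r] ε = -ε := flipShift_iter_r ε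
  have hmain : flipShift^[s] ε = ((-1 : ℤ) ^ (q + 1)) • ε := by
    have h1 : flipShift^[r] ε = flipShift^[s] (flipShift^[d * q] ε) := by
      rw [← Function.iterate_add_apply]; congr 1; omega
    rw [flipShift_iter_mul ε d hflip q] at h1
    have h2 : flipShift^[s] (((-1 : ℤ) ^ q) • ε) = ((-1 : ℤ) ^ q) • flipShift^[s] ε := by
      rcases Nat.even_or_odd q with he | ho
      · rw [he.neg_one_pow]; simp
      · have h : ((-1 : ℤ) ^ q) • ε = -ε := by
          rw [ho.neg_one_pow]; funext i; simp
        rw [h, flipShift_iter_neg, ho.neg_one_pow]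
        funext i; simp
    rw [h1, h2] at hiter
    funext i
    have hthis := congrFun hiter i
    simp only [Pi.smul_apply, smul_eq_mul, Pi.neg_apply] at hthis ⊢
    rcases Nat.even_or_odd q with he | ho
    · rw [he.neg_one_pow, one_mul] at hthis
      rw [hthis, he.add_one.neg_one_pow]
      ring
    · rw [ho.neg_one_pow, neg_one_mul] at hthis
      have h3 : flipShift^[s] ε i = ε i := by linarith
      rw [h3, ho.add_one.neg_one_pow]
      ring
  have hodd : Odd q := by
    by_contra hcon
    have heq : Even q := Nat.not_odd_iff_even.mp hcon
    have hq1 : Odd (q + 1) := heq.add_one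
    have hthis : flipShift^[s] ε = -ε := by
      rw [hmain, hq1.neg_one_pow]
      funext i; simp
    rcases Nat.eq_zero_or_pos s with h0 | hpos
    · rw [h0, Function.iterate_zero_apply] at hthis
      exact hne0 hthis
    · exact absurd (hmin s hpos hthis) (by omega)
  have hs0 : s = 0 := by
    by_contra hcon
    have hpos : 0 < s := Nat.pos_of_ne_zero hcon
    have hq1 : Even (q + 1) := hodd.add_one
    have hper : flipShift^[s] ε = ε := by
      rw [hmain, hq1.neg_one_pow]
      funext i; simp
    have hperu : ∀ u, flipShift^[s * u] ε = ε := by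
      intro u
      induction u with
      | zero => simp
      | succ n ih =>
          rw [show s * (n + 1) = s * n + s by ring, Function.iterate_add_apply, hper, ih]
    have hdsplit : flipShift^[d] ε = flipShift^[d % s] (flipShift^[s * (d / s)] ε) := by
      rw [← Function.iterate_add_apply]; congr 1
      have := Nat.div_add_mod d s
      omega
    rw [hperu, hflip] at hdsplit
    have hmlt : d % s < s := Nat.mod_lt d hpos
    rcases Nat.eq_zero_or_pos (d % s) with h0 | hpos'
    · rw [h0, Function.iterate_zero_apply] at hdsplit
      exact hne0 hdsplit.symm
    · exact absurd (hmin _ hpos' hdsplit.symm) (by omega)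
  refine ⟨⟨q, by omega⟩, hodd, ?_⟩
  intro x y hx hy
  have hlt : y + d * x < r := by have := idx_lt hx hy; omega
  have key := flipShift_no_wrap (d * x) ε y hlt
  rw [flipShift_iter_mul ε d hflip x] at key
  simp only [Pi.smul_apply, smul_eq_mul] at key
  rw [show (⟨d * x + y, idx_lt hx hy⟩ : Fin r) = ⟨y + d * x, hlt⟩ from
    Fin.mk_eq_mk.mpr (by omega)]
  exact key.symm
end

section
/- Let p be an odd prime, r = (p-1)/2, d | r with D := r/d odd, and ζ ∈ F_p^× a primitive 2r-th root of unity. Suppose ε ∈ {±1}^r satisfies ε_{dx+y} = (-1)^x ε_y for 0 ≤ x < D, 0 ≤ y < d. Then for every odd integer k, Σ_{n=0}^{r-1} ε_n ζ^{nk} = B_k · Σ_{x=0}^{D-1} (-ζ^d)^{xk}, where B_k = Σ_{y=0}^{d-1} ε_y ζ^{yk}; consequently Σ_{n=0}^{r-1} ε_n ζ^{nk} = D·B_k if D | k and equals 0 if D ∤ k. -/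
/-!
Writing `n = d * x + y`, antiperiodicity turns `ε (d x + y) ζ^{(d x + y) k}` into
`ε y ζ^{y k} · (-1)^x ζ^{d x k}`, and for odd `k` this last factor is `(-ζ^d)^{x k}`, so the sum
factors. As `ζ^d` is a primitive `2D`-th root of unity with `D` odd, `-ζ^d` is a primitive
`D`-th root of unity, and the geometric sum `Σ_x (-ζ^d)^{x k}` is `D` or `0` according as
`D ∣ k` or not.
-/

open Finset

theorem Finset.sum_range_mul_eq_sum_sum {M : Type*} [AddCommMonoid M] (d D : ℕ) (f : ℕ → M) :
    ∑ n ∈ range (d * D), f n = ∑ x ∈ range D, ∑ y ∈ range d, f (d * x + y) := by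
  induction D with
  | zero => simp
  | succ D ih => rw [Nat.mul_succ, sum_range_add, ih, sum_range_succ]

namespace IsPrimitiveRoot

variable {K : Type*} [Field K] {q : K} {D : ℕ}

theorem neg_of_odd {R : Type*} [CommRing R] [IsDomain R] {ω : R} (hω : IsPrimitiveRoot ω (2 * D))
    (hD : Odd D) : IsPrimitiveRoot (-ω) D where
  pow_eq_one := by
    have hsq : (ω ^ D) ^ 2 = 1 := by rw [← pow_mul, mul_comm, hω.pow_eq_one]
    have hne : ω ^ D ≠ 1 := hω.pow_ne_one_of_pos_of_lt hD.pos.ne' (by linarith [hD.pos])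
    rw [neg_pow, hD.neg_one_pow, (sq_eq_one_iff.mp hsq).resolve_left hne, neg_one_mul, neg_neg]
  dvd_of_pow_eq_one l hl := by
    have h2l : ω ^ (2 * l) = 1 := by rw [pow_mul, ← neg_sq, ← pow_mul, mul_comm, pow_mul, hl, one_pow]
    exact Nat.dvd_of_mul_dvd_mul_left two_pos (hω.dvd_of_pow_eq_one _ h2l)

theorem sum_zpow_mul_of_dvd (hq : IsPrimitiveRoot q D) {k : ℤ} (hk : (D : ℤ) ∣ k) :
    ∑ x ∈ range D, q ^ ((x : ℤ) * k) = D := by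
  obtain ⟨m, rfl⟩ := hk
  have hqD : q ^ (D : ℤ) = 1 := by rw [zpow_natCast, hq.pow_eq_one]
  simp_rw [mul_left_comm _ (D : ℤ), zpow_mul, hqD, one_zpow, sum_const, card_range, nsmul_one]

theorem sum_zpow_mul_of_not_dvd (hq : IsPrimitiveRoot q D) {k : ℤ} (hk : ¬ (D : ℤ) ∣ k) :
    ∑ x ∈ range D, q ^ ((x : ℤ) * k) = 0 := by
  have ht : q ^ k ≠ 1 := mt (hq.zpow_eq_one_iff_dvd k).mp hk
  have htD : (q ^ k) ^ D = 1 := by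
    rw [← zpow_natCast, ← zpow_mul, mul_comm, zpow_mul, zpow_natCast, hq.pow_eq_one, one_zpow]
  simp_rw [mul_comm _ k, zpow_mul, zpow_natCast]
  rw [geom_sum_eq ht, htD, sub_self, zero_div]

end IsPrimitiveRoot

theorem sum_range_mul_eq_mul_of_antiperiodic {K : Type*} [Field K] {ζ : K} (hζ : ζ ≠ 0) {d D : ℕ}
    {ε : ℕ → ℤ} (halt : ∀ x < D, ∀ y < d, ε (d * x + y) = (-1 : ℤ) ^ x * ε y) {k : ℤ} (hk : Odd k) :
    ∑ n ∈ range (d * D), (ε n : K) * ζ ^ ((n : ℤ) * k) =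
      (∑ y ∈ range d, (ε y : K) * ζ ^ ((y : ℤ) * k)) * ∑ x ∈ range D, (-(ζ ^ d)) ^ ((x : ℤ) * k) := by
  rw [sum_range_mul_eq_sum_sum, sum_comm, sum_mul_sum]
  refine sum_congr rfl fun y hy => sum_congr rfl fun x hx => ?_
  have hneg : (-(ζ ^ d)) ^ ((x : ℤ) * k) = (-1 : K) ^ x * ζ ^ ((d * x : ℕ) * k) := by
    rw [mul_comm (x : ℤ), zpow_mul, hk.neg_zpow, zpow_natCast, neg_pow, ← zpow_natCast ζ d,
      ← zpow_mul, ← zpow_natCast (ζ ^ ((d : ℤ) * k)) x, ← zpow_mul]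
    push_cast; ring_nf
  rw [halt x (mem_range.mp hx) y (mem_range.mp hy), hneg, Nat.cast_add, add_mul, zpow_add₀ hζ]
  push_cast
  ring

theorem stmt_14_general (p r d D : ℕ) [Fact p.Prime] (hd : 0 < d) (hD : r = d * D)
    (hodd : Odd D) (ζ : ZMod p) (hζ : IsPrimitiveRoot ζ (2 * r)) (ε : ℕ → ℤ)
    (halt : ∀ x < D, ∀ y < d, ε (d * x + y) = (-1 : ℤ) ^ x * ε y)
    (k : ℤ) (hk : Odd k) :
    (∑ n ∈ Finset.range r, (ε n : ZMod p) * ζ ^ ((n : ℤ) * k)) =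
      (∑ y ∈ Finset.range d, (ε y : ZMod p) * ζ ^ ((y : ℤ) * k)) *
        (∑ x ∈ Finset.range D, (-(ζ ^ d)) ^ ((x : ℤ) * k)) ∧
    ((D : ℤ) ∣ k →
      (∑ n ∈ Finset.range r, (ε n : ZMod p) * ζ ^ ((n : ℤ) * k)) =
        (D : ZMod p) * ∑ y ∈ Finset.range d, (ε y : ZMod p) * ζ ^ ((y : ℤ) * k)) ∧
    (¬ (D : ℤ) ∣ k →
      (∑ n ∈ Finset.range r, (ε n : ZMod p) * ζ ^ ((n : ℤ) * k)) = 0) := by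
  subst hD
  have hpos : 0 < 2 * (d * D) := by have := hodd.pos; positivity
  have hq : IsPrimitiveRoot (-(ζ ^ d)) D :=
    (hζ.pow hpos (by ring)).neg_of_odd hodd
  have hsum := sum_range_mul_eq_mul_of_antiperiodic (hζ.ne_zero hpos.ne') halt hk
  refine ⟨hsum, fun hdvd => ?_, fun hndvd => ?_⟩
  · rw [hsum, hq.sum_zpow_mul_of_dvd hdvd, mul_comm]
  · rw [hsum, hq.sum_zpow_mul_of_not_dvd hndvd, mul_zero]

/-- If `ε ∈ {±1}^r` is alternating periodic of period `d` with odd quotient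
`D = r/d`, and `ζ` is a primitive `2r`-th root of unity in `F_p`, then for
every odd `k` the signed half sum factors as `B_k · Σ_x (-ζ^d)^{xk}`; it
equals `D·B_k` when `D ∣ k` and `0` otherwise. -/
theorem stmt_14 (p r d D : ℕ) [Fact p.Prime] (hp : p ≠ 2)
    (hr : r = (p - 1) / 2) (hd : 0 < d) (hdr : d ∣ r) (hD : r = d * D)
    (hodd : Odd D) (ζ : ZMod p) (hζ : IsPrimitiveRoot ζ (2 * r))
    (ε : ℕ → ℤ) (hε : ∀ n < r, ε n = 1 ∨ ε n = -1)
    (halt : ∀ x < D, ∀ y < d, ε (d * x + y) = (-1 : ℤ) ^ x * ε y)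
    (k : ℤ) (hk : Odd k) :
    (∑ n ∈ Finset.range r, (ε n : ZMod p) * ζ ^ ((n : ℤ) * k)) =
      (∑ y ∈ Finset.range d, (ε y : ZMod p) * ζ ^ ((y : ℤ) * k)) *
        (∑ x ∈ Finset.range D, (-(ζ ^ d)) ^ ((x : ℤ) * k)) ∧
    ((D : ℤ) ∣ k →
      (∑ n ∈ Finset.range r, (ε n : ZMod p) * ζ ^ ((n : ℤ) * k)) =
        (D : ZMod p) * ∑ y ∈ Finset.range d, (ε y : ZMod p) * ζ ^ ((y : ℤ) * k)) ∧
    (¬ (D : ℤ) ∣ k →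
      (∑ n ∈ Finset.range r, (ε n : ZMod p) * ζ ^ ((n : ℤ) * k)) = 0) :=
  stmt_14_general p r d D hd hD hodd ζ hζ ε halt k hk
end

section
/- Let p be an odd prime, r = (p-1)/2, and ξ ∈ F_p^× a primitive (p-1)-th root of unity. Let ℓ be an integer with gcd(ℓ, p-1) = 1. Then the number of sign vectors ε ∈ {±1}^r with Σ_{n=0}^{r-1} ε_n ξ^{nℓ} = 0 in F_p equals (1/p)·(2^r + (p-1)·legendre(2, p)), where legendre(2,p) ∈ {1,-1} is the Legendre symbol of 2 mod p. -/
open Finset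

private lemma addChar_map_sum {A M : Type*} [AddCommMonoid A] [CommMonoid M]
    (ψ : AddChar A M) {ι : Type*} (s : Finset ι) (f : ι → A) :
    ψ (∑ i ∈ s, f i) = ∏ i ∈ s, ψ (f i) := by
  classical
  induction s using Finset.cons_induction with
  | empty => simp
  | cons a s ha ih => rw [Finset.sum_cons, Finset.prod_cons, AddChar.map_add_eq_mul, ih]

private lemma int_units_univ : (Finset.univ : Finset ℤˣ) = {1, -1} := by
  ext u
  simp only [Finset.mem_univ, Finset.mem_insert, Finset.mem_singleton, true_iff]
  exact Int.units_eq_one_or u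

private lemma sum_int_units {M : Type*} [AddCommMonoid M] (f : ℤˣ → M) :
    ∑ u : ℤˣ, f u = f 1 + f (-1) := by
  rw [int_units_univ, Finset.sum_insert (by decide), Finset.sum_singleton]

set_option maxHeartbeats 1000000 in
/-- Counting solutions of a signed half sum: for `ℓ` coprime to `p-1` and `ξ`
a primitive `(p-1)`-th root of unity in `F_p`, the number of sign vectors
`ε ∈ {±1}^r` (with `r = (p-1)/2`) satisfying `Σ_n ε_n ξ^{nℓ} = 0` equals
`(1/p)(2^r + (p-1)·(2/p))`, stated here multiplied through by `p`. -/
theorem stmt_15 (p : ℕ) [Fact p.Prime] (hp : p ≠ 2) (r : ℕ)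
    (hr : r = (p - 1) / 2) (ξ : ZMod p) (hξ : IsPrimitiveRoot ξ (p - 1))
    (ℓ : ℤ) (hℓ : Int.gcd ℓ ((p : ℤ) - 1) = 1) :
    (p : ℤ) *
      ((Finset.univ.filter (fun ε : Fin r → ℤˣ =>
        (∑ n : Fin r, ((ε n : ℤ) : ZMod p) * ξ ^ (((n : ℕ) : ℤ) * ℓ)) = 0)).card : ℤ)
      = 2 ^ r + ((p : ℤ) - 1) * legendreSym p 2 := by
  classical
  have hprime : p.Prime := Fact.out
  haveI : NeZero p := ⟨hprime.ne_zero⟩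
  have hodd : p % 2 = 1 := Nat.odd_iff.mp (hprime.odd_of_ne_two hp)
  have hp2 : 2 ≤ p := hprime.two_le
  have hpr : p = 2 * r + 1 := by omega
  have hξ0 : ξ ≠ 0 := by
    intro h
    have h1 := hξ.pow_eq_one
    rw [h] at h1
    have : (p:ℕ) - 1 ≠ 0 := by omega
    rw [zero_pow this] at h1
    exact zero_ne_one h1
  -- the additive character
  set ζ : ℂ := Complex.exp (2 * Real.pi * Complex.I / p) with hζdef
  have hζ : IsPrimitiveRoot ζ p := Complex.isPrimitiveRoot_exp p (NeZero.ne p)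
  set ψ : AddChar (ZMod p) ℂ := AddChar.zmodChar p hζ.pow_eq_one with hψdef
  have hψprim : ψ.IsPrimitive := AddChar.zmodChar_primitive_of_primitive_root p hζ
  have hψ1 : ∀ x : ZMod p, ψ x = 1 → x = 0 := by
    intro x h
    rw [hψdef, AddChar.zmodChar_apply] at h
    have := (hζ.pow_eq_one_iff_dvd _).mp h
    have hlt := ZMod.val_lt x
    exact (ZMod.val_eq_zero x).mp (Nat.eq_zero_of_dvd_of_lt this hlt)
  -- notation
  set a : Fin r → ZMod p := fun n => ξ ^ (((n : ℕ) : ℤ) * ℓ) with hadef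
  set Φ : ZMod p → ℂ := fun x => ψ x + ψ (-x) with hΦdef
  set Ψ : ZMod p → ℂ := fun x => ψ x - ψ (-x) with hΨdef
  set T : Finset (ZMod p) := Finset.univ.filter (fun x : ZMod p => x ≠ 0 ∧ x.val ≤ r) with hTdef
  set abs : ZMod p → ZMod p := fun x => if x.val ≤ r then x else -x with habsdef
  have hmemT : ∀ x : ZMod p, x ∈ T ↔ x ≠ 0 ∧ x.val ≤ r := by
    intro x; rw [hTdef]; simp
  have habs_spec : ∀ x : ZMod p, abs x = x ∨ abs x = -x := by
    intro x; rw [habsdef]; dsimp only; split <;> simp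
  have habs_mem : ∀ x : ZMod p, x ≠ 0 → abs x ∈ T := by
    intro x hx
    rw [hmemT, habsdef]
    dsimp only
    by_cases h : x.val ≤ r
    · rw [if_pos h]; exact ⟨hx, h⟩
    · rw [if_neg h]
      have hv : x.val < p := ZMod.val_lt x
      refine ⟨by simpa using hx, ?_⟩
      rw [ZMod.neg_val, if_neg hx]
      omega
  have haneq : ∀ n : Fin r, a n ≠ 0 := fun n => zpow_ne_zero _ hξ0
  -- cardinality of T
  have hTcard : T.card = r := by
    apply Finset.card_eq_of_bijective (fun i _ => ((i + 1 : ℕ) : ZMod p))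
    · intro x hx
      rw [hmemT] at hx
      have hv0 : x.val ≠ 0 := fun h0 => hx.1 ((ZMod.val_eq_zero x).mp h0)
      refine ⟨x.val - 1, by omega, ?_⟩
      have : x.val - 1 + 1 = x.val := by omega
      rw [this]
      exact ZMod.natCast_rightInverse x
    · intro i hi
      rw [hmemT]
      have hlt : i + 1 < p := by omega
      have hval : ((i + 1 : ℕ) : ZMod p).val = i + 1 := ZMod.val_cast_of_lt hlt
      constructor
      · intro h0
        rw [h0, ZMod.val_zero] at hval
        omega
      · omega
    · intro i j hi hj hij
      have h1 : ((i + 1 : ℕ) : ZMod p).val = i + 1 := ZMod.val_cast_of_lt (by omega)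
      have h2 : ((j + 1 : ℕ) : ZMod p).val = j + 1 := ZMod.val_cast_of_lt (by omega)
      rw [hij] at h1
      omega
  -- injectivity of n ↦ a n up to sign
  have key_inj : ∀ m n : Fin r, ∀ c : ZMod p, c ^ 2 = 1 → a m = c * a n → m = n := by
    intro m n c hc h
    have hsq : a m * a m = a n * a n := by
      rw [h]
      have : c * a n * (c * a n) = c ^ 2 * (a n * a n) := by ring
      rw [this, hc, one_mul]
    have hzp : ξ ^ ((((m : ℕ) : ℤ) * ℓ) + (((m : ℕ) : ℤ) * ℓ)) =
        ξ ^ ((((n : ℕ) : ℤ) * ℓ) + (((n : ℕ) : ℤ) * ℓ)) := by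
      rw [zpow_add₀ hξ0, zpow_add₀ hξ0]
      exact hsq
    have hone : ξ ^ ((2 * (((m : ℕ) : ℤ) - ((n : ℕ) : ℤ))) * ℓ) = 1 := by
      have : (2 * (((m : ℕ) : ℤ) - ((n : ℕ) : ℤ))) * ℓ =
          ((((m : ℕ) : ℤ) * ℓ) + (((m : ℕ) : ℤ) * ℓ)) - ((((n : ℕ) : ℤ) * ℓ) + (((n : ℕ) : ℤ) * ℓ)) := by
        ring
      rw [this, zpow_sub₀ hξ0, hzp, div_self (zpow_ne_zero _ hξ0)]
    have hdvd := (hξ.zpow_eq_one_iff_dvd _).mp hone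
    have hcast : (((p : ℕ) - 1 : ℕ) : ℤ) = (p : ℤ) - 1 := by
      push_cast [Nat.cast_sub (by omega : 1 ≤ p)]; ring
    rw [hcast] at hdvd
    have hco : IsCoprime ((p : ℤ) - 1) ℓ :=
      (Int.isCoprime_iff_gcd_eq_one.mpr hℓ).symm
    have hdvd2 : ((p : ℤ) - 1) ∣ 2 * (((m : ℕ) : ℤ) - ((n : ℕ) : ℤ)) :=
      hco.dvd_of_dvd_mul_right hdvd
    have hmn : (2 * (((m : ℕ) : ℤ) - ((n : ℕ) : ℤ))) = 0 := by
      apply Int.eq_zero_of_dvd_of_natAbs_lt_natAbs hdvd2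
      have h1 := m.isLt
      have h2 := n.isLt
      omega
    have : (m : ℕ) = (n : ℕ) := by omega
    exact Fin.ext this
  have hΦeven : ∀ x : ZMod p, Φ (-x) = Φ x := by
    intro x; rw [hΦdef]; dsimp only; rw [neg_neg]; ring
  have hΦabs : ∀ x : ZMod p, Φ (abs x) = Φ x := by
    intro x
    rcases habs_spec x with h | h <;> rw [h]
    exact hΦeven x
  have hΨodd : ∀ x : ZMod p, Ψ (-x) = -Ψ x := by
    intro x; rw [hΨdef]; dsimp only; rw [neg_neg]; ring
  -- the key sign extraction from abs
  have habs_pm : ∀ x y : ZMod p, abs x = abs y → x = y ∨ x = -y := by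
    intro x y h
    rcases habs_spec x with h1 | h1 <;> rcases habs_spec y with h2 | h2 <;>
      rw [h1, h2] at h
    · exact Or.inl h
    · exact Or.inr h
    · right; rw [← h, neg_neg]
    · left; exact neg_injective h
  -- the transversal product lemma
  have hmain_t : ∀ t : ZMod p, t ≠ 0 → ∏ n : Fin r, Φ (t * a n) = ∏ x ∈ T, Φ x := by
    intro t ht
    set g : Fin r → ZMod p := fun n => abs (t * a n) with hgdef
    have hginj : Function.Injective g := by
      intro m n h
      rcases habs_pm _ _ h with h' | h'
      · exact key_inj m n 1 (by ring) (mul_left_cancel₀ ht (by rw [h', one_mul]))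
      · refine key_inj m n (-1) (by ring) ?_
        have : t * a m = t * ((-1) * a n) := by rw [h']; ring
        exact mul_left_cancel₀ ht this
    have hgmem : ∀ n, g n ∈ T := fun n => habs_mem _ (mul_ne_zero ht (haneq n))
    have himg : Finset.univ.image g = T := by
      apply Finset.eq_of_subset_of_card_le
      · intro x hx
        rcases Finset.mem_image.mp hx with ⟨n, _, rfl⟩
        exact hgmem n
      · rw [Finset.card_image_of_injective _ hginj, Finset.card_univ, Fintype.card_fin, hTcard]
    calc ∏ n : Fin r, Φ (t * a n) = ∏ n : Fin r, Φ (g n) := by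
          refine Finset.prod_congr rfl fun n _ => ?_
          rw [hgdef]; exact (hΦabs _).symm
      _ = ∏ x ∈ Finset.univ.image g, Φ x :=
          (Finset.prod_image (fun x _ y _ h => hginj h)).symm
      _ = ∏ x ∈ T, Φ x := by rw [himg]
  -- doubling is injective away from 0
  have h2ne : ∀ x : ZMod p, x ≠ 0 → x + x ≠ 0 := by
    intro x hx h2
    have hv0 : x.val ≠ 0 := fun h => hx ((ZMod.val_eq_zero x).mp h)
    have hv : (x + x).val = 0 := by rw [h2, ZMod.val_zero]
    rw [ZMod.val_add] at hv
    have hvlt := ZMod.val_lt x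
    have hdvd : p ∣ x.val + x.val := Nat.dvd_of_mod_eq_zero hv
    rcases hdvd with ⟨c, hc⟩
    have hc2 : c < 2 := by
      by_contra hcge
      push_neg at hcge
      have : p * 2 ≤ p * c := Nat.mul_le_mul_left p hcge
      omega
    interval_cases c <;> omega
  -- Ψ does not vanish on T
  have hΨne : ∀ x ∈ T, Ψ x ≠ 0 := by
    intro x hx h0
    rw [hmemT] at hx
    have heq : ψ x = ψ (-x) := by
      rw [hΨdef] at h0; dsimp only at h0; linear_combination h0
    have hinv : ψ x * ψ (-x) = 1 := by
      rw [← AddChar.map_add_eq_mul, add_neg_cancel, AddChar.map_zero_eq_one]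
    have h1 : ψ (x + x) = 1 := by
      rw [AddChar.map_add_eq_mul]
      nth_rewrite 2 [heq]
      exact hinv
    exact h2ne x hx.1 (hψ1 _ h1)
  -- doubling map on T
  set σ : ZMod p → ZMod p := fun x => abs (x + x) with hσdef
  have hσinjT : ∀ x ∈ T, ∀ y ∈ T, σ x = σ y → x = y := by
    intro x hx y hy h
    rw [hmemT] at hx hy
    rcases habs_pm _ _ h with h' | h'
    · have : (2 : ZMod p) * x = 2 * y := by rw [two_mul, two_mul]; exact h'
      have h2z : (2 : ZMod p) ≠ 0 := by
        intro hc
        have : ((2 : ℕ) : ZMod p) = 0 := by exact_mod_cast hc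
        rw [ZMod.natCast_eq_zero_iff] at this
        have := Nat.le_of_dvd (by norm_num) this
        omega
      exact mul_left_cancel₀ h2z this
    · exfalso
      have hxy : x = -y := by
        have : (2 : ZMod p) * x = 2 * (-y) := by
          rw [two_mul, two_mul, ← neg_add]; exact h'
        have h2z : (2 : ZMod p) ≠ 0 := by
          intro hc
          have : ((2 : ℕ) : ZMod p) = 0 := by exact_mod_cast hc
          rw [ZMod.natCast_eq_zero_iff] at this
          have := Nat.le_of_dvd (by norm_num) this
          omega
        exact mul_left_cancel₀ h2z this
      have hvy : y.val ≠ 0 := fun hh => hy.1 ((ZMod.val_eq_zero y).mp hh)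
      have hxv : x.val = p - y.val := by
        rw [hxy, ZMod.neg_val, if_neg hy.1]
      have hx2 := hx.2
      have hy2 := hy.2
      omega
  have hσmem : ∀ x ∈ T, σ x ∈ T := by
    intro x hx
    rw [hmemT] at hx
    exact habs_mem _ (h2ne x hx.1)
  have hσimg : T.image σ = T := by
    apply Finset.eq_of_subset_of_card_le
    · intro y hy
      rcases Finset.mem_image.mp hy with ⟨x, hx, rfl⟩
      exact hσmem x hx
    · rw [Finset.card_image_of_injOn hσinjT]
  -- pointwise product identity
  have hΦΨ : ∀ x : ZMod p, Φ x * Ψ x = Ψ (x + x) := by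
    intro x
    rw [hΦdef, hΨdef]
    dsimp only
    have h1 : ψ (x + x) = ψ x * ψ x := AddChar.map_add_eq_mul ψ x x
    have h2 : ψ (-(x + x)) = ψ (-x) * ψ (-x) := by
      rw [neg_add]; exact AddChar.map_add_eq_mul ψ (-x) (-x)
    rw [h1, h2]; ring
  -- signs
  set ν : ℕ := (T.filter (fun x : ZMod p => ¬ (x + x).val ≤ r)).card with hνdef
  have hsplit : ∀ x : ZMod p, Ψ (x + x) = (if (x + x).val ≤ r then (1:ℂ) else -1) * Ψ (σ x) := by
    intro x
    rw [hσdef, habsdef]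
    dsimp only
    by_cases h : (x + x).val ≤ r
    · rw [if_pos h, if_pos h, one_mul]
    · rw [if_neg h, if_neg h, hΨodd]; ring
  have hDne : ∏ x ∈ T, Ψ x ≠ 0 := Finset.prod_ne_zero_iff.mpr hΨne
  have hPsign : ∏ x ∈ T, Φ x = (-1 : ℂ) ^ ν := by
    have hc1 : (∏ x ∈ T, Φ x) * ∏ x ∈ T, Ψ x = ∏ x ∈ T, Ψ (x + x) := by
      rw [← Finset.prod_mul_distrib]
      exact Finset.prod_congr rfl fun x _ => hΦΨ x
    have hc2 : ∏ x ∈ T, Ψ (x + x)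
        = ((-1 : ℂ) ^ ν) * ∏ x ∈ T, Ψ x := by
      calc ∏ x ∈ T, Ψ (x + x)
          = ∏ x ∈ T, (if (x + x).val ≤ r then (1:ℂ) else -1) * Ψ (σ x) :=
            Finset.prod_congr rfl fun x _ => hsplit x
        _ = (∏ x ∈ T, if (x + x).val ≤ r then (1:ℂ) else -1) * ∏ x ∈ T, Ψ (σ x) :=
            Finset.prod_mul_distrib
        _ = ((-1 : ℂ) ^ ν) * ∏ x ∈ T, Ψ x := by
            congr 1
            · rw [Finset.prod_ite, Finset.prod_const, Finset.prod_const, one_pow, one_mul, hνdef]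
            · rw [← Finset.prod_image hσinjT, hσimg]
    have := hc1.trans hc2
    exact mul_right_cancel₀ hDne this
  -- computing ν
  have hν : ν = r - r / 2 := by
    rw [hνdef]
    apply Finset.card_eq_of_bijective (fun i _ => ((r / 2 + 1 + i : ℕ) : ZMod p))
    · intro x hx
      rw [Finset.mem_filter, hmemT] at hx
      obtain ⟨⟨hx0, hxr⟩, hgt⟩ := hx
      have hv0 : x.val ≠ 0 := fun h => hx0 ((ZMod.val_eq_zero x).mp h)
      have hvadd : (x + x).val = x.val + x.val := by
        rw [ZMod.val_add, Nat.mod_eq_of_lt (by omega)]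
      rw [hvadd] at hgt
      refine ⟨x.val - (r / 2 + 1), by omega, ?_⟩
      have : r / 2 + 1 + (x.val - (r / 2 + 1)) = x.val := by omega
      rw [this]
      exact ZMod.natCast_rightInverse x
    · intro i hi
      set k := r / 2 + 1 + i with hk
      have hkr : k ≤ r := by omega
      have hkp : k < p := by omega
      have hval : ((k : ℕ) : ZMod p).val = k := ZMod.val_cast_of_lt hkp
      rw [Finset.mem_filter, hmemT]
      have hvadd : (((k : ℕ) : ZMod p) + ((k : ℕ) : ZMod p)).val = k + k := by
        rw [ZMod.val_add, hval, Nat.mod_eq_of_lt (by omega)]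
      refine ⟨⟨?_, by omega⟩, by omega⟩
      intro h0
      rw [h0, ZMod.val_zero] at hval
      omega
    · intro i j hi hj hij
      have h1 : ((r / 2 + 1 + i : ℕ) : ZMod p).val = r / 2 + 1 + i :=
        ZMod.val_cast_of_lt (by omega)
      have h2 : ((r / 2 + 1 + j : ℕ) : ZMod p).val = r / 2 + 1 + j :=
        ZMod.val_cast_of_lt (by omega)
      rw [hij] at h1
      omega
  -- the sign is the Legendre symbol
  have hsign : ((-1 : ℂ)) ^ ν = ((legendreSym p 2 : ℤ) : ℂ) := by
    rw [legendreSym.at_two hp, ZMod.χ₈_nat_eq_if_mod_eight, hν, hodd]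
    have h8 : p % 8 = 1 ∨ p % 8 = 3 ∨ p % 8 = 5 ∨ p % 8 = 7 := by omega
    rcases h8 with h8 | h8 | h8 | h8 <;>
      rw [h8] <;> norm_num
    · have : (r - r / 2) % 2 = 0 := by omega
      rw [(Nat.even_iff.mpr this).neg_one_pow]
    · have : (r - r / 2) % 2 = 1 := by omega
      rw [(Nat.odd_iff.mpr this).neg_one_pow]
    · have : (r - r / 2) % 2 = 1 := by omega
      rw [(Nat.odd_iff.mpr this).neg_one_pow]
    · have : (r - r / 2) % 2 = 0 := by omega
      rw [(Nat.even_iff.mpr this).neg_one_pow]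
  -- orthogonality
  have horth : ∀ b : ZMod p, ∑ t : ZMod p, ψ (t * b) = if b = 0 then (p : ℂ) else 0 := by
    intro b
    rw [AddChar.sum_mulShift b hψprim]
    split_ifs with h <;> simp [ZMod.card]
  set F : (Fin r → ℤˣ) → ZMod p := fun ε => ∑ n : Fin r, ((ε n : ℤ) : ZMod p) * a n with hF
  have hEsum : ∀ t : ZMod p, ∑ ε : Fin r → ℤˣ, ψ (t * F ε) = ∏ n : Fin r, Φ (t * a n) := by
    intro t
    have h1 : ∀ ε : Fin r → ℤˣ, ψ (t * F ε)
        = ∏ n : Fin r, ψ (t * (((ε n : ℤ) : ZMod p) * a n)) := by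
      intro ε
      rw [hF]
      dsimp only
      rw [Finset.mul_sum, addChar_map_sum]
    calc ∑ ε : Fin r → ℤˣ, ψ (t * F ε)
        = ∑ ε : Fin r → ℤˣ, ∏ n : Fin r, ψ (t * (((ε n : ℤ) : ZMod p) * a n)) :=
          Finset.sum_congr rfl fun ε _ => h1 ε
      _ = ∏ n : Fin r, ∑ u : ℤˣ, ψ (t * (((u : ℤ) : ZMod p) * a n)) :=
          (Fintype.prod_sum (fun (n : Fin r) (u : ℤˣ) => ψ (t * (((u : ℤ) : ZMod p) * a n)))).symm
      _ = ∏ n : Fin r, Φ (t * a n) := by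
          refine Finset.prod_congr rfl fun n _ => ?_
          rw [sum_int_units (fun u => ψ (t * (((u : ℤ) : ZMod p) * a n)))]
          have e1 : (((1 : ℤˣ) : ℤ) : ZMod p) = 1 := by norm_num
          have e2 : ((((-1) : ℤˣ) : ℤ) : ZMod p) = -1 := by norm_num
          have e3 : t * ((-1 : ZMod p) * a n) = -(t * a n) := by ring
          rw [e1, e2, one_mul, e3, hΦdef]
  have hNfilter : (Finset.univ.filter (fun ε : Fin r → ℤˣ =>
        (∑ n : Fin r, ((ε n : ℤ) : ZMod p) * ξ ^ (((n : ℕ) : ℤ) * ℓ)) = 0))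
      = Finset.univ.filter (fun ε : Fin r → ℤˣ => F ε = 0) := by
    apply Finset.filter_congr
    intro ε _
    rw [hF]
  set N : ℕ := (Finset.univ.filter (fun ε : Fin r → ℤˣ => F ε = 0)).card with hN
  have hcomplex : (p : ℂ) * (N : ℂ)
      = 2 ^ r + ((p : ℂ) - 1) * ((legendreSym p 2 : ℤ) : ℂ) := by
    have c1 : (p : ℂ) * (N : ℂ)
        = ∑ ε ∈ Finset.univ.filter (fun ε : Fin r → ℤˣ => F ε = 0), (p : ℂ) := by
      rw [Finset.sum_const, hN, nsmul_eq_mul, mul_comm]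
    have c2 : ∑ ε ∈ Finset.univ.filter (fun ε : Fin r → ℤˣ => F ε = 0), (p : ℂ)
        = ∑ ε : Fin r → ℤˣ, if F ε = 0 then (p : ℂ) else 0 :=
      Finset.sum_filter _ _
    have c3 : (∑ ε : Fin r → ℤˣ, if F ε = 0 then (p : ℂ) else 0)
        = ∑ ε : Fin r → ℤˣ, ∑ t : ZMod p, ψ (t * F ε) :=
      Finset.sum_congr rfl fun ε _ => (horth (F ε)).symm
    have c4 : (∑ ε : Fin r → ℤˣ, ∑ t : ZMod p, ψ (t * F ε))
        = ∑ t : ZMod p, ∑ ε : Fin r → ℤˣ, ψ (t * F ε) := Finset.sum_comm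
    have c5 : (∑ t : ZMod p, ∑ ε : Fin r → ℤˣ, ψ (t * F ε))
        = ∑ t : ZMod p, ∏ n : Fin r, Φ (t * a n) :=
      Finset.sum_congr rfl fun t _ => hEsum t
    have c6 : (∑ t : ZMod p, ∏ n : Fin r, Φ (t * a n))
        = (∏ n : Fin r, Φ (0 * a n))
          + ∑ t ∈ Finset.univ.erase (0 : ZMod p), ∏ n : Fin r, Φ (t * a n) :=
      (Finset.add_sum_erase _ _ (Finset.mem_univ 0)).symm
    have c7 : (∏ n : Fin r, Φ ((0 : ZMod p) * a n)) = 2 ^ r := by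
      have : ∀ n : Fin r, Φ ((0 : ZMod p) * a n) = 2 := by
        intro n
        rw [zero_mul, hΦdef]
        dsimp only
        rw [neg_zero, AddChar.map_zero_eq_one]
        norm_num
      rw [Finset.prod_congr rfl fun n _ => this n, Finset.prod_const, Finset.card_univ,
        Fintype.card_fin]
    have c8 : (∑ t ∈ Finset.univ.erase (0 : ZMod p), ∏ n : Fin r, Φ (t * a n))
        = ((p : ℂ) - 1) * ((legendreSym p 2 : ℤ) : ℂ) := by
      have heach : ∀ t ∈ Finset.univ.erase (0 : ZMod p),
          (∏ n : Fin r, Φ (t * a n)) = ((legendreSym p 2 : ℤ) : ℂ) := by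
        intro t ht
        rw [hmain_t t (Finset.ne_of_mem_erase ht), hPsign, hsign]
      rw [Finset.sum_congr rfl heach, Finset.sum_const, Finset.card_erase_of_mem (Finset.mem_univ 0),
        Finset.card_univ, ZMod.card, nsmul_eq_mul]
      congr 1
      push_cast [Nat.cast_sub (by omega : 1 ≤ p)]
      ring
    rw [c1, c2, c3, c4, c5, c6, c7, c8]
  show (p:ℤ) * ((Finset.univ.filter (fun ε : Fin r → ℤˣ =>
        (∑ n : Fin r, ((ε n : ℤ) : ZMod p) * ξ ^ (((n : ℕ) : ℤ) * ℓ)) = 0)).card : ℤ)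
      = 2 ^ r + ((p : ℤ) - 1) * legendreSym p 2
  rw [hNfilter]
  have hfin : (((p : ℤ) * (N : ℤ) : ℤ) : ℂ)
      = (((2 : ℤ) ^ r + ((p : ℤ) - 1) * (legendreSym p 2 : ℤ) : ℤ) : ℂ) := by
    push_cast
    push_cast at hcomplex
    linear_combination hcomplex
  have := Int.cast_injective (α := ℂ) hfin
  exact_mod_cast this
end

section
/- Let ζ_p = e^{2πi/p} for an odd prime p. Then Π_{k=1}^{(p-1)/2} (ζ_p^k + ζ_p^{-k}) = (2/p), the Legendre symbol of 2 modulo p. -/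
/-!
With `s(n) = ζ ^ n - ζ ^ (-n)`, which is odd and `p`-periodic when `ζ ^ p = 1`, the map sending
`k` to the absolute value of the least absolute residue of `a * k` permutes `1, …, (p - 1) / 2`
whenever `p ∤ a`. Hence `∏ s(a k) = (-1) ^ μ * ∏ s(k)`, where `μ` counts the negative residues,
and `(-1) ^ μ = (a / p)` is Gauss' lemma. For `a = 2` we have `s(2k) = (ζ ^ k + ζ ^ (-k)) * s(k)`,
and for a primitive `ζ` the factors `s(k)` do not vanish, so they cancel.
-/

open Finset

-- For `ζ = e ^ (2πi/p)` this is `2i · sin (2πn/p)`.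
def cycSine {K : Type*} [Field K] (ζ : K) (n : ℤ) : K := ζ ^ n - ζ ^ (-n)

section CycSine

variable {K : Type*} [Field K] {ζ : K}

lemma cycSine_neg (ζ : K) (n : ℤ) : cycSine ζ (-n) = -cycSine ζ n := by
  simp only [cycSine, neg_neg, neg_sub]

lemma cycSine_two_mul (ζ : K) (n : ℤ) :
    cycSine ζ (2 * n) = (ζ ^ n + ζ ^ (-n)) * cycSine ζ n := by
  simp only [cycSine, zpow_neg, mul_comm 2 n, zpow_mul, zpow_two]
  ring

lemma zpow_eq_zpow_of_intCast_eq {p : ℕ} [NeZero p] (hζ : ζ ^ p = 1) {m n : ℤ}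
    (h : (m : ZMod p) = n) : ζ ^ m = ζ ^ n := by
  have hζ0 : ζ ≠ 0 := by
    rintro rfl
    exact zero_ne_one ((zero_pow (NeZero.ne p)).symm.trans hζ)
  obtain ⟨t, ht⟩ := (ZMod.intCast_eq_intCast_iff_dvd_sub m n p).mp h
  rw [show n = m + p * t by omega, zpow_add₀ hζ0, zpow_mul, zpow_natCast, hζ, one_zpow, mul_one]

lemma cycSine_eq_of_intCast_eq {p : ℕ} [NeZero p] (hζ : ζ ^ p = 1) {m n : ℤ}
    (h : (m : ZMod p) = n) : cycSine ζ m = cycSine ζ n := by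
  have h' : ((-m : ℤ) : ZMod p) = (-n : ℤ) := by push_cast; rw [h]
  rw [cycSine, cycSine, zpow_eq_zpow_of_intCast_eq hζ h, zpow_eq_zpow_of_intCast_eq hζ h']

lemma cycSine_eq_sign_mul_natAbs_valMinAbs {p : ℕ} [NeZero p] (hζ : ζ ^ p = 1) (n : ℤ) :
    cycSine ζ n = (if p / 2 < (n : ZMod p).val then -1 else 1) *
      cycSine ζ (n : ZMod p).valMinAbs.natAbs := by
  rw [cycSine_eq_of_intCast_eq hζ (ZMod.coe_valMinAbs (n : ZMod p)).symm]
  split_ifs with h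
  · have hneg : (n : ZMod p).valMinAbs < 0 := by
      rwa [← not_le, ZMod.valMinAbs_nonneg_iff, not_le]
    rw [Int.ofNat_natAbs_of_nonpos hneg.le, cycSine_neg, neg_one_mul, neg_neg]
  · rw [Int.natAbs_of_nonneg ((ZMod.valMinAbs_nonneg_iff _).mpr (not_lt.mp h)), one_mul]

lemma cycSine_ne_zero {p : ℕ} [NeZero p] (hζ : IsPrimitiveRoot ζ p) {n : ℤ}
    (hn : ¬ (p : ℤ) ∣ 2 * n) : cycSine ζ n ≠ 0 := by
  intro h
  have hζn : ζ ^ n = ζ ^ (-n) := sub_eq_zero.mp h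
  refine hn ((hζ.zpow_eq_one_iff_dvd _).mp ?_)
  have hζ0 := hζ.ne_zero (NeZero.ne p)
  rw [two_mul, zpow_add₀ hζ0]
  nth_rw 2 [hζn]
  rw [← zpow_add₀ hζ0, add_neg_cancel, zpow_zero]

theorem prod_cycSine_mul_eq_legendreSym_mul {p : ℕ} [Fact p.Prime] (hp : p ≠ 2)
    (hζ : ζ ^ p = 1) {a : ℤ} (ha : (a : ZMod p) ≠ 0) :
    ∏ k ∈ Ico 1 (p / 2).succ, cycSine ζ (a * k) =
      legendreSym p a * ∏ k ∈ Ico 1 (p / 2).succ, cycSine ζ k := by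
  have hfold : ∏ k ∈ Ico 1 (p / 2).succ,
      cycSine ζ ((a : ZMod p) * k : ZMod p).valMinAbs.natAbs =
        ∏ k ∈ Ico 1 (p / 2).succ, cycSine ζ k := by
    simpa only [prod_eq_multiset_prod, Multiset.map_map, Function.comp_def] using
      congrArg (fun s => (s.map fun j : ℕ => cycSine ζ j).prod)
        (ZMod.Ico_map_valMinAbs_natAbs_eq_Ico_map_id p _ ha)
  simp_rw [cycSine_eq_sign_mul_natAbs_valMinAbs hζ (a * _)]
  simp only [Int.cast_mul, Int.cast_natCast] at hfold ⊢
  rw [prod_mul_distrib, prod_ite, prod_const, prod_const, one_pow, mul_one, hfold,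
    ZMod.gauss_lemma hp ha, Int.cast_pow, Int.cast_neg, Int.cast_one]

end CycSine

/-- `Π_{k=1}^{(p-1)/2} (ζ_p^k + ζ_p^{-k}) = (2/p)`, where `ζ_p = e^{2πi/p}`
and `(2/p)` is the Legendre symbol of `2` mod `p`. -/
theorem stmt_16 (p : ℕ) [Fact p.Prime] (hp : p ≠ 2) :
    (∏ k ∈ Finset.Icc 1 ((p - 1) / 2),
      (Complex.exp (2 * Real.pi * Complex.I / p) ^ (k : ℤ) +
        Complex.exp (2 * Real.pi * Complex.I / p) ^ (-(k : ℤ))))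
      = ((legendreSym p 2 : ℤ) : ℂ) := by
  have hodd : p % 2 = 1 := (Fact.out : p.Prime).eq_two_or_odd.resolve_left hp
  set ζ := Complex.exp (2 * Real.pi * Complex.I / p)
  have hζ : IsPrimitiveRoot ζ p := Complex.isPrimitiveRoot_exp p (NeZero.ne p)
  have h2 : ((2 : ℤ) : ZMod p) ≠ 0 := by
    exact_mod_cast Ring.two_ne_zero ((ZMod.ringChar_zmod_n p).substr hp)
  have hprod_ne : ∏ k ∈ Ico 1 (p / 2).succ, cycSine ζ k ≠ 0 := by
    refine prod_ne_zero_iff.mpr fun k hk => cycSine_ne_zero hζ ?_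
    have hk := mem_Ico.mp hk
    exact_mod_cast Nat.not_dvd_of_pos_of_lt (by omega) (by omega)
  have hgauss := prod_cycSine_mul_eq_legendreSym_mul hp hζ.pow_eq_one h2
  simp only [cycSine_two_mul, prod_mul_distrib] at hgauss
  rw [show (p - 1) / 2 = p / 2 by omega, ← Ico_add_one_right_eq_Icc]
  exact mul_right_cancel₀ hprod_ne hgauss
end

section
/- Let p be an odd prime with p-1 = 2^s·q, q odd, s ≥ 2, and set r = (p-1)/2 and d = 2^{s-1}. If ε ∈ {±1}^r satisfies ε_{dx+y} = (-1)^x·h(y) for some h : {0,...,d-1} → {±1} (all 0 ≤ x < q, 0 ≤ y < d), then the unique polynomial f of degree < r with f(γ^{2n}) = ε_n γ^n for all n (γ a fixed generator of F_p^×) has coefficient c_k = 0 for every k not congruent to (q+1)/2 modulo q. In particular f has at most 2^{s-1} nonzero monomials, all in degrees (q+1)/2 + tq for 0 ≤ t ≤ 2^{s-1}-1. -/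
open Polynomial

private lemma sum_range_mul_aux {M : Type*} [AddCommMonoid M] (g : ℕ → M) (d : ℕ) :
    ∀ q : ℕ, ∑ n ∈ Finset.range (d * q), g n
      = ∑ x ∈ Finset.range q, ∑ y ∈ Finset.range d, g (d * x + y) := by
  intro q
  induction q with
  | zero => simp
  | succ q ih =>
      rw [Finset.sum_range_succ, ← ih, Nat.mul_succ, Finset.sum_range_add]

private lemma coeff_formula_aux {K : Type*} [Field K] {r : ℕ} (_hr0 : 0 < r) {β : K}
    (hβ : IsPrimitiveRoot β r) (f : Polynomial K) (hdeg : f.natDegree < r)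
    (k : ℕ) (hk : k < r) :
    (r : K) * f.coeff k = ∑ n ∈ Finset.range r, f.eval (β ^ n) * (β ^ (r - k)) ^ n := by
  have hβ1 : β ^ r = 1 := hβ.pow_eq_one
  have hrw : ∀ n : ℕ, f.eval (β ^ n) = ∑ j ∈ Finset.range r, f.coeff j * (β ^ n) ^ j :=
    fun n => Polynomial.eval_eq_sum_range' hdeg _
  refine Eq.symm ?_
  calc ∑ n ∈ Finset.range r, f.eval (β ^ n) * (β ^ (r - k)) ^ n
      = ∑ n ∈ Finset.range r, ∑ j ∈ Finset.range r,
          f.coeff j * (β ^ (j + (r - k))) ^ n := by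
        refine Finset.sum_congr rfl fun n _ => ?_
        rw [hrw n, Finset.sum_mul]
        refine Finset.sum_congr rfl fun j _ => ?_
        have hpow : (β ^ n) ^ j * (β ^ (r - k)) ^ n = (β ^ (j + (r - k))) ^ n := by
          rw [← pow_mul, ← pow_mul, ← pow_add, ← pow_mul]
          congr 1
          ring
        rw [mul_assoc, hpow]
    _ = ∑ j ∈ Finset.range r, f.coeff j * ∑ n ∈ Finset.range r, (β ^ (j + (r - k))) ^ n := by
        rw [Finset.sum_comm]
        exact Finset.sum_congr rfl fun j _ => (Finset.mul_sum _ _ _).symm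
    _ = (r : K) * f.coeff k := by
        rw [Finset.sum_eq_single_of_mem k (Finset.mem_range.2 hk)]
        · have : β ^ (k + (r - k)) = 1 := by
            rw [Nat.add_sub_cancel' hk.le, hβ1]
          rw [this]
          simp [mul_comm]
        · intro j hj hjk
          have hjr := Finset.mem_range.1 hj
          have hne : β ^ (j + (r - k)) ≠ 1 := by
            intro h1
            have hdvd : r ∣ j + (r - k) := (hβ.pow_eq_one_iff_dvd _).1 h1
            obtain ⟨t, ht⟩ := hdvd
            have ht1 : t = 1 := by
              rcases t with _ | t
              · simp at ht; omega
              rcases t with _ | t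
              · rfl
              exfalso
              have hge : 2 * r ≤ r * (t + 1 + 1) := by
                calc 2 * r = r * 2 := by ring
                _ ≤ r * (t + 1 + 1) := Nat.mul_le_mul_left r (by omega)
              omega
            rw [ht1, mul_one] at ht
            exact hjk (by omega)
          have hgeo : ∑ n ∈ Finset.range r, (β ^ (j + (r - k))) ^ n = 0 := by
            rw [geom_sum_eq hne, ← pow_mul, mul_comm, pow_mul, hβ1, one_pow,
              sub_self, zero_div]
          rw [hgeo, mul_zero]

/-- If the sign vector `ε` is alternating periodic with period `d = 2^{s-1}`
(the Tonelli–Shanks family), then the interpolating polynomial `f` of degree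
`< r` with `f(γ^{2n}) = ε_n γ^n` has `coeff k = 0` for every `k` not congruent
to `(q+1)/2` mod `q`. -/
theorem stmt_18 (p s q : ℕ) [Fact p.Prime] (hpq : p - 1 = 2 ^ s * q)
    (hq : Odd q) (hs : 2 ≤ s) (r d : ℕ) (hr : r = (p - 1) / 2)
    (hd : d = 2 ^ (s - 1)) (γ : ZMod p) (hγ : IsPrimitiveRoot γ (p - 1))
    (h : ℕ → ℤ) (hsign : ∀ y, h y = 1 ∨ h y = -1)
    (ε : ℕ → ℤ) (hε : ∀ x < q, ∀ y < d, ε (d * x + y) = (-1 : ℤ) ^ x * h y)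
    (f : Polynomial (ZMod p)) (hdeg : f.natDegree < r)
    (hint : ∀ n < r, f.eval (γ ^ (2 * n)) = (ε n : ZMod p) * γ ^ n) :
    ∀ k : ℕ, ¬ k ≡ (q + 1) / 2 [MOD q] → f.coeff k = 0 := by
  intro k hk
  have hp : p.Prime := Fact.out
  have hq1 : 1 ≤ q := hq.pos
  have hd2 : 2 ≤ d := by
    rw [hd]
    calc 2 = 2 ^ 1 := (pow_one 2).symm
    _ ≤ 2 ^ (s - 1) := Nat.pow_le_pow_right (by norm_num) (by omega)
  have h2s : 2 ^ s = 2 * 2 ^ (s - 1) := by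
    conv_lhs => rw [show s = (s - 1) + 1 by omega]
    rw [pow_succ]
    ring
  have hp2r : p - 1 = 2 * (d * q) := by
    rw [hpq, h2s, hd]; ring
  have hrdq : r = d * q := by
    rw [hr, hp2r, Nat.mul_div_cancel_left _ (by norm_num)]
  have hr0 : 0 < r := by
    rw [hrdq]; positivity
  have hp1 : p - 1 = 2 * r := by omega
  by_cases hkr : r ≤ k
  · exact Polynomial.coeff_eq_zero_of_natDegree_lt (lt_of_lt_of_le hdeg hkr)
  push_neg at hkr
  -- β = γ² is a primitive r-th root of unity
  have hβ : IsPrimitiveRoot (γ ^ 2) r := hγ.pow (by omega) (by rw [hp1])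
  have hneg : γ ^ r = -1 := by
    have h2 : γ ^ r * γ ^ r = 1 := by
      rw [← pow_add, show r + r = p - 1 by omega, hγ.pow_eq_one]
    rcases mul_self_eq_one_iff.1 h2 with h1 | h1
    · exfalso
      have := (hγ.pow_eq_one_iff_dvd r).1 h1
      have := Nat.le_of_dvd hr0 this
      omega
    · exact h1
  set δ : ZMod p := γ ^ (2 * (r - k) + 1) with hδ
  have hcoef := coeff_formula_aux hr0 hβ f hdeg k hkr
  have hev : ∀ n ∈ Finset.range r,
      f.eval ((γ ^ 2) ^ n) * ((γ ^ 2) ^ (r - k)) ^ n = (ε n : ZMod p) * δ ^ n := by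
    intro n hn
    have hn' := Finset.mem_range.1 hn
    have h1 : (γ ^ 2) ^ n = γ ^ (2 * n) := (pow_mul γ 2 n).symm
    rw [h1, hint n hn']
    have h2 : γ ^ n * ((γ ^ 2) ^ (r - k)) ^ n = δ ^ n := by
      rw [hδ, ← pow_mul, ← pow_mul, ← pow_add, ← pow_mul]
      congr 1
      ring
    rw [mul_assoc, h2]
  rw [Finset.sum_congr rfl hev] at hcoef
  -- split the sum
  rw [hrdq, sum_range_mul_aux] at hcoef
  set ζ : ZMod p := -(δ ^ d) with hζ
  have hζq : ζ ^ q = 1 := by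
    rw [hζ, neg_pow, ← pow_mul, hδ, ← pow_mul]
    have : γ ^ ((2 * (r - k) + 1) * (d * q)) = (γ ^ r) ^ (2 * (r - k) + 1) := by
      rw [← pow_mul, hrdq]; ring_nf
    rw [this, hneg, Odd.neg_pow hq, Odd.neg_one_pow (by exact ⟨r - k, by ring⟩)]
    simp
  have hζ1 : ζ ≠ 1 := by
    intro hone
    have hone' : -(δ ^ d) = 1 := by rw [← hζ]; exact hone
    have hδd : δ ^ d = -1 := neg_eq_iff_eq_neg.mp hone' 
    have hmul : γ ^ ((2 * (r - k) + 1) * d + d * q) = 1 := by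
      rw [pow_add]
      rw [show γ ^ ((2 * (r - k) + 1) * d) = δ ^ d by rw [hδ, ← pow_mul]]
      rw [hδd, show γ ^ (d * q) = γ ^ r by rw [hrdq], hneg]
      ring
    have hdvd : p - 1 ∣ (2 * (r - k) + 1) * d + d * q := (hγ.pow_eq_one_iff_dvd _).1 hmul
    rw [hp2r] at hdvd
    have hdvd2 : 2 * q ∣ 2 * (r - k) + 1 + q := by
      have heq : (2 * (r - k) + 1) * d + d * q = d * (2 * (r - k) + 1 + q) := by ring
      rw [heq] at hdvd
      have : d * (2 * q) ∣ d * (2 * (r - k) + 1 + q) := by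
        convert hdvd using 1; ring
      exact (Nat.mul_dvd_mul_iff_left (by omega : 0 < d)).1 this
    have hqdvd : q ∣ 2 * (r - k) + 1 := by
      have h1 : q ∣ 2 * (r - k) + 1 + q := (dvd_mul_left q 2).trans hdvd2
      have h2 := Nat.dvd_sub h1 (dvd_refl q)
      simpa using h2
    -- derive k ≡ (q+1)/2 [MOD q]
    set M : ℕ := (q + 1) / 2 with hM
    have h2M : 2 * M = q + 1 := by
      have : (2 : ℕ) ∣ q + 1 := hq.add_one.two_dvd
      rw [hM]; exact Nat.mul_div_cancel' this
    have hq2r : q ∣ 2 * r := by rw [hrdq]; exact ⟨2 * d, by ring⟩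
    have hmod : 2 * k ≡ 2 * M [MOD q] := by
      have e1 : (0 : ℕ) ≡ 2 * (r - k) + 1 [MOD q] := (Nat.modEq_zero_iff_dvd.2 hqdvd).symm
      have e2 : 2 * k ≡ 2 * k + (2 * (r - k) + 1) [MOD q] := by
        simpa using (Nat.ModEq.refl (2 * k)).add e1
      have e3 : 2 * k + (2 * (r - k) + 1) = 2 * r + 1 := by omega
      have e4 : 2 * r + 1 ≡ 0 + 1 [MOD q] :=
        (Nat.modEq_zero_iff_dvd.2 hq2r).add_right 1
      have e5 : 2 * M ≡ 0 + 1 [MOD q] := by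
        rw [h2M]
        exact (Nat.modEq_zero_iff_dvd.2 (dvd_refl q)).add_right 1
      calc 2 * k ≡ 2 * k + (2 * (r - k) + 1) [MOD q] := e2
      _ = 2 * r + 1 := e3
      _ ≡ 0 + 1 [MOD q] := e4
      _ ≡ 2 * M [MOD q] := e5.symm
    exact hk (Nat.ModEq.cancel_left_of_coprime (Nat.coprime_two_right.mpr hq) hmod)
  -- geometric sum over x vanishes
  have hgeo : ∑ x ∈ Finset.range q, ζ ^ x = 0 := by
    rw [geom_sum_eq hζ1, hζq, sub_self, zero_div]
  have hfactor : ∑ x ∈ Finset.range q, ∑ y ∈ Finset.range d,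
      (ε (d * x + y) : ZMod p) * δ ^ (d * x + y)
      = (∑ x ∈ Finset.range q, ζ ^ x)
        * ∑ y ∈ Finset.range d, (h y : ZMod p) * δ ^ y := by
    rw [Finset.sum_mul]
    refine Finset.sum_congr rfl fun x hx => ?_
    rw [Finset.mul_sum]
    refine Finset.sum_congr rfl fun y hy => ?_
    rw [hε x (Finset.mem_range.1 hx) y (Finset.mem_range.1 hy)]
    push_cast
    rw [hζ, neg_pow, pow_add, pow_mul]
    ring
  rw [hfactor, hgeo, zero_mul, ← hrdq] at hcoef
  have hrne : (r : ZMod p) ≠ 0 := by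
    rw [Ne, ZMod.natCast_eq_zero_iff]
    intro hdvd
    have := Nat.le_of_dvd hr0 hdvd
    have hrlt : r < p := by omega
    omega
  exact (mul_eq_zero.1 hcoef).resolve_left hrne
end
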